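/- arXiv:1603.03098 — 7 statements merged into one kernel-verified Lean document; each statement's English description precedes it below -/
import Mathlib

section
/- Let I_1, ..., I_n be closed intervals on the real line all containing a common point p, such that no interval σ-shadows another (σ ∈ (0,1)). Then n = O(1/σ²); more precisely n ≤ C·(1/σ + 2)² for an absolute constant C (e.g. C = 4). -/
/-- The interval `[a, b]` `σ`-shadows the interval `[l, r]` if
`[l, r] ⊆ [a - σ(r - l), b + σ(r - l)]`. -/
def IntShadows (σ a b l r : ℝ) : Prop :=
  Set.Icc l r ⊆ Set.Icc (a - σ * (r - l)) (b + σ * (r - l))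

/-- A `σ`-exposed family of intervals (no interval `σ`-shadows another) all containing a
common point `p` has at most `O(1/σ²)` members; precisely at most `4 (1/σ + 2)²`. -/
theorem stmt2 (σ : ℝ) (hσ0 : 0 < σ) (hσ1 : σ < 1) (n : ℕ)
    (l r : Fin n → ℝ) (p : ℝ) (hmem : ∀ i, p ∈ Set.Icc (l i) (r i))
    (hexp : ∀ i j, i ≠ j → ¬ IntShadows σ (l i) (r i) (l j) (r j)) :
    (n : ℝ) ≤ 4 * (1 / σ + 2) ^ 2 := by
  have hσinv : (1:ℝ) ≤ 1 / σ := by rw [le_div_iff₀ hσ0]; linarith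
  have hRHS : (36:ℝ) ≤ 4 * (1 / σ + 2) ^ 2 := by nlinarith
  rcases le_or_gt n 1 with hn | hn
  · have : (n:ℝ) ≤ 1 := by exact_mod_cast hn
    linarith
  -- all intervals have positive length
  have hL : ∀ i, 0 < r i - l i := by
    intro i
    by_contra h
    push_neg at h
    obtain ⟨h1, h2⟩ := hmem i
    have hli : l i = p := le_antisymm h1 (by linarith)
    have hri : r i = p := le_antisymm (by linarith) h2
    obtain ⟨j, hj⟩ : ∃ j : Fin n, j ≠ i :=
      Fintype.exists_ne_of_one_lt_card (by simpa using hn) i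
    apply hexp j i hj
    intro x hx
    rw [hli, hri] at hx
    simp only [Set.mem_Icc] at hx ⊢
    obtain ⟨hq1, hq2⟩ := hmem j
    constructor
    · nlinarith [hx.1, hx.2]
    · nlinarith [hx.1, hx.2]
  set f : Fin n → ℤ × ℤ := fun i =>
    (⌊(p - l i) / (σ * (r i - l i))⌋, ⌊(r i - p) / (σ * (r i - l i))⌋) with hf
  have key : ∀ i j : Fin n, i ≠ j → r j - l j ≤ r i - l i → f i ≠ f j := by
    intro i j hij hle heq
    have hLj := hL j
    have hLi := hL i
    have hσLj : 0 < σ * (r j - l j) := by positivity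
    have hσLi : 0 < σ * (r i - l i) := by positivity
    have hle' : σ * (r j - l j) ≤ σ * (r i - l i) := by nlinarith
    have hns := hexp i j hij
    rw [IntShadows, Set.Icc_subset_Icc_iff (by linarith)] at hns
    push_neg at hns
    have h1 : (f i).1 = (f j).1 := congrArg Prod.fst heq
    have h2 : (f i).2 = (f j).2 := congrArg Prod.snd heq
    simp only [hf] at h1 h2
    rcases lt_or_ge (l j) (l i - σ * (r j - l j)) with hc | hc
    · -- left endpoint escapes: a_j > a_i + σ L_j
      have haj : p - l j > (p - l i) + σ * (r j - l j) := by linarith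
      have hai0 : 0 ≤ p - l i := by linarith [(hmem i).1]
      have step1 : (p - l i) / (σ * (r i - l i)) + 1 ≤ (p - l j) / (σ * (r j - l j)) := by
        have e1 : (p - l i) / (σ * (r i - l i)) ≤ (p - l i) / (σ * (r j - l j)) :=
          div_le_div_of_nonneg_left hai0 hσLj hle' |>.trans_eq rfl
        have e2 : (p - l i) / (σ * (r j - l j)) + 1 ≤ (p - l j) / (σ * (r j - l j)) := by
          rw [div_add' _ _ _ (ne_of_gt hσLj)]
          apply div_le_div_of_nonneg_right ?_ hσLj.le |>.trans_eq rfl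
          · linarith
        linarith
      have : ⌊(p - l i) / (σ * (r i - l i))⌋ + 1 ≤ ⌊(p - l j) / (σ * (r j - l j))⌋ := by
        have := Int.floor_le_floor step1
        rwa [Int.floor_add_one] at this
      omega
    · have hrj : r j > r i + σ * (r j - l j) := hns hc
      have hbi0 : 0 ≤ r i - p := by linarith [(hmem i).2]
      have step1 : (r i - p) / (σ * (r i - l i)) + 1 ≤ (r j - p) / (σ * (r j - l j)) := by
        have e1 : (r i - p) / (σ * (r i - l i)) ≤ (r i - p) / (σ * (r j - l j)) :=
          div_le_div_of_nonneg_left hbi0 hσLj hle'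
        have e2 : (r i - p) / (σ * (r j - l j)) + 1 ≤ (r j - p) / (σ * (r j - l j)) := by
          rw [div_add' _ _ _ (ne_of_gt hσLj)]
          apply div_le_div_of_nonneg_right ?_ hσLj.le
          · linarith
        linarith
      have : ⌊(r i - p) / (σ * (r i - l i))⌋ + 1 ≤ ⌊(r j - p) / (σ * (r j - l j))⌋ := by
        have := Int.floor_le_floor step1
        rwa [Int.floor_add_one] at this
      omega
  have hinj : Function.Injective f := by
    intro i j heq
    by_contra hij
    rcases le_total (r j - l j) (r i - l i) with hle | hle
    · exact key i j hij hle heq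
    · exact key j i (Ne.symm hij) hle heq.symm
  -- range bound
  set M : ℤ := ⌊(1:ℝ)/σ⌋ with hM
  have hM1 : 1 ≤ M := by
    rw [hM]
    exact_mod_cast Int.le_floor.mpr (by exact_mod_cast hσinv)
  have hmaps : ∀ i, f i ∈ Finset.Icc (0:ℤ) M ×ˢ Finset.Icc (0:ℤ) M := by
    intro i
    have hLi := hL i
    have hσLi : 0 < σ * (r i - l i) := by positivity
    obtain ⟨h1, h2⟩ := hmem i
    have ha0 : 0 ≤ p - l i := by linarith
    have hb0 : 0 ≤ r i - p := by linarith
    have haM : (p - l i) / (σ * (r i - l i)) ≤ 1 / σ := by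
      rw [div_le_div_iff₀ hσLi hσ0]
      nlinarith
    have hbM : (r i - p) / (σ * (r i - l i)) ≤ 1 / σ := by
      rw [div_le_div_iff₀ hσLi hσ0]
      nlinarith
    simp only [Finset.mem_product, Finset.mem_Icc, hf]
    refine ⟨⟨Int.floor_nonneg.mpr (by positivity), Int.floor_le_floor haM⟩,
      ⟨Int.floor_nonneg.mpr (by positivity), Int.floor_le_floor hbM⟩⟩
  have hcard : n ≤ (Finset.Icc (0:ℤ) M ×ˢ Finset.Icc (0:ℤ) M).card := by
    have := Finset.card_le_card_of_injOn (s := Finset.univ) f (fun i _ => hmaps i) hinj.injOn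
    simpa using this
  have hcard2 : (Finset.Icc (0:ℤ) M ×ˢ Finset.Icc (0:ℤ) M).card = ((M+1).toNat)^2 := by
    rw [Finset.card_product, Int.card_Icc, sq]
    norm_num
  rw [hcard2] at hcard
  have hM1' : (1:ℝ) ≤ (M:ℝ) := by exact_mod_cast hM1
  have hMle : (M:ℝ) ≤ 1/σ := Int.floor_le _
  have hn2 : (n:ℝ) ≤ ((M:ℝ)+1)^2 := by
    have e : ((M+1).toNat : ℝ) = (M:ℝ)+1 := by
      have h := Int.toNat_of_nonneg (show (0:ℤ) ≤ M + 1 by omega)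
      exact_mod_cast congrArg (Int.cast : ℤ → ℝ) h
    calc (n:ℝ) ≤ (((M+1).toNat : ℝ))^2 := by exact_mod_cast hcard
      _ = ((M:ℝ)+1)^2 := by rw [e]
  have h1 : ((M:ℝ)+1)^2 ≤ (1/σ+1)^2 :=
    pow_le_pow_left₀ (by linarith) (by linarith) 2
  nlinarith [hn2, h1, hσinv]
end

section
/- Let ℱ be a family of objects in ℝ^d such that ℱ is (σ, k)-exposed, and suppose every σ-exposed subfamily of ℱ has density at most ρ. Then ℱ has density at most (2k+1)·ρ. -/
open scoped Classical

/-- An object `A` `σ`-shadows an object `B` if every point of `B` is within distance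
`σ · diam B` of `A`, i.e. `B ⊆ A ⊕ B(0, σ · diam B)`. -/
def Shadows {X : Type*} [MetricSpace X] (σ : ℝ) (A B : Set X) : Prop :=
  ∀ p ∈ B, Metric.infDist p A ≤ σ * Metric.diam B

/-- A family `F` of objects has density at most `ρ` if for every ball of radius `r > 0`,
at most `ρ` members of `F` of diameter at least `2r` intersect it. -/
def HasDensityLE {X : Type*} [MetricSpace X] (F : Finset (Set X)) (ρ : ℝ) : Prop :=
  ∀ (c : X) (r : ℝ), 0 < r → ∀ s ⊆ F,
    (∀ o ∈ s, (o ∩ Metric.closedBall c r).Nonempty ∧ 2 * r ≤ Metric.diam o) →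
    (s.card : ℝ) ≤ ρ

lemma exists_coloring {X : Type*} [MetricSpace X] (σ : ℝ) (k : ℕ) (F : Finset (Set X))
    (hexp : ∀ o ∈ F, ∀ s ⊆ F.erase o, (∀ o' ∈ s, Shadows σ o' o) → s.card ≤ k) :
    ∀ G : Finset (Set X), G ⊆ F → ∃ c : Set X → Fin (2*k+1),
      ∀ o ∈ G, ∀ o' ∈ G, o ≠ o' → Shadows σ o o' → c o ≠ c o' := by
  intro G
  induction G using Finset.strongInduction with
  | _ G ih =>
    intro hGF
    rcases G.eq_empty_or_nonempty with rfl | hne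
    · exact ⟨fun _ => 0, by simp⟩
    have key : ∀ (P : Set X → Set X → Prop) (o : Set X),
        ((G.erase o).filter (fun b => P o b)).card
          = ∑ b ∈ G, (if b ≠ o ∧ P o b then 1 else 0) := by
      intro P o
      rw [← Finset.filter_ne', Finset.filter_filter, Finset.card_filter]
    have hInk : ∀ o ∈ G, ((G.erase o).filter (fun o' => Shadows σ o' o)).card ≤ k := by
      intro o ho
      refine hexp o (hGF ho) _ ((Finset.filter_subset _ _).trans
        (Finset.erase_subset_erase o hGF)) (fun o' h => (Finset.mem_filter.mp h).2)
    have hsum : ∑ o ∈ G, ((G.erase o).filter (fun o' => Shadows σ o o')).card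
        = ∑ o ∈ G, ((G.erase o).filter (fun o' => Shadows σ o' o)).card := by
      have kOut : ∀ o : Set X, ((G.erase o).filter (fun o' => Shadows σ o o')).card
          = ∑ b ∈ G, (if b ≠ o ∧ Shadows σ o b then 1 else 0) :=
        fun o => key (fun x y => Shadows σ x y) o
      have kIn : ∀ o : Set X, ((G.erase o).filter (fun o' => Shadows σ o' o)).card
          = ∑ b ∈ G, (if b ≠ o ∧ Shadows σ b o then 1 else 0) :=
        fun o => key (fun x y => Shadows σ y x) o
      rw [Finset.sum_congr rfl fun o _ => kOut o, Finset.sum_congr rfl fun o _ => kIn o,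
        Finset.sum_comm]
      refine Finset.sum_congr rfl fun b _ => Finset.sum_congr rfl fun a _ => ?_
      congr 1
      simp only [eq_iff_iff]
      constructor <;> exact fun h => ⟨h.1.symm, h.2⟩
    -- minimum degree vertex
    have hdegsum : ∑ o ∈ G, ((G.erase o).filter
        (fun o' => Shadows σ o o' ∨ Shadows σ o' o)).card ≤ ∑ _o ∈ G, 2*k := by
      calc ∑ o ∈ G, ((G.erase o).filter (fun o' => Shadows σ o o' ∨ Shadows σ o' o)).card
          ≤ ∑ o ∈ G, (((G.erase o).filter (fun o' => Shadows σ o o')).card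
              + ((G.erase o).filter (fun o' => Shadows σ o' o)).card) := by
            refine Finset.sum_le_sum fun o _ => ?_
            rw [Finset.filter_or]
            exact Finset.card_union_le _ _
        _ = ∑ o ∈ G, ((G.erase o).filter (fun o' => Shadows σ o o')).card
              + ∑ o ∈ G, ((G.erase o).filter (fun o' => Shadows σ o' o)).card :=
            Finset.sum_add_distrib
        _ ≤ ∑ _o ∈ G, 2*k := by
            rw [hsum, Finset.sum_const, smul_eq_mul]
            have := Finset.sum_le_sum hInk
            rw [Finset.sum_const, smul_eq_mul] at this
            calc _ ≤ G.card * k + G.card * k := add_le_add this this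
              _ = G.card * (2*k) := by ring
    obtain ⟨o, ho, hdeg⟩ := Finset.exists_le_of_sum_le hne hdegsum
    set N := (G.erase o).filter (fun o' => Shadows σ o o' ∨ Shadows σ o' o) with hN
    obtain ⟨c, hc⟩ := ih (G.erase o) (Finset.erase_ssubset ho)
      ((Finset.erase_subset o G).trans hGF)
    have : ∃ i : Fin (2*k+1), i ∉ N.image c := by
      by_contra h
      push_neg at h
      have h1 : (Finset.univ : Finset (Fin (2*k+1))) ⊆ N.image c :=
        fun i _ => h i
      have := Finset.card_le_card h1
      simp only [Finset.card_univ, Fintype.card_fin] at this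
      have := this.trans (Finset.card_image_le.trans hdeg)
      omega
    obtain ⟨i, hi⟩ := this
    refine ⟨Function.update c o i, ?_⟩
    intro a ha b hb hab hsh
    by_cases hao : a = o
    · subst hao
      have hbN : b ∈ N := Finset.mem_filter.mpr
        ⟨Finset.mem_erase.mpr ⟨fun h => hab h.symm, hb⟩, Or.inl hsh⟩
      rw [Function.update_self, Function.update_of_ne (fun h => hab h.symm)]
      exact fun h => hi (h ▸ Finset.mem_image_of_mem c hbN)
    · by_cases hbo : b = o
      · subst hbo
        have haN : a ∈ N := Finset.mem_filter.mpr
          ⟨Finset.mem_erase.mpr ⟨hao, ha⟩, Or.inr hsh⟩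
        rw [Function.update_self, Function.update_of_ne hao]
        exact fun h => hi (h ▸ Finset.mem_image_of_mem c haN)
      · rw [Function.update_of_ne hao, Function.update_of_ne hbo]
        exact hc a (Finset.mem_erase.mpr ⟨hao, ha⟩) b (Finset.mem_erase.mpr ⟨hbo, hb⟩) hab hsh


/-- If `F` is `(σ, k)`-exposed (every member is `σ`-shadowed by at most `k` other members),
and every `σ`-exposed subfamily of `F` has density at most `ρ`, then `F` has density at
most `(2k+1) ρ`. -/
theorem stmt7 (d : ℕ) (σ ρ : ℝ) (k : ℕ) (hσ : 0 < σ)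
    (F : Finset (Set (EuclideanSpace ℝ (Fin d))))
    (hexp : ∀ o ∈ F, ∀ s ⊆ F.erase o, (∀ o' ∈ s, Shadows σ o' o) → s.card ≤ k)
    (hρ : ∀ F' ⊆ F, (∀ o ∈ F', ∀ o' ∈ F', o ≠ o' → ¬ Shadows σ o o') →
      HasDensityLE F' ρ) :
    HasDensityLE F ((2 * k + 1) * ρ) := by
  intro c r hr s hsF hs
  obtain ⟨col, hcol⟩ := exists_coloring σ k F hexp F (subset_refl F)
  have hcard : s.card = ∑ i : Fin (2*k+1), (s.filter (fun o => col o = i)).card :=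
    Finset.card_eq_sum_card_fiberwise (fun x _ => Finset.mem_univ (col x))
  have hfib : ∀ i : Fin (2*k+1), ((s.filter (fun o => col o = i)).card : ℝ) ≤ ρ := by
    intro i
    refine hρ (F.filter (fun o => col o = i)) (Finset.filter_subset _ _) ?_ c r hr
      (s.filter (fun o => col o = i)) (Finset.filter_subset_filter _ hsF)
      (fun o ho => hs o (Finset.mem_filter.mp ho).1)
    intro o ho o' ho' hne hsh
    have h1 := Finset.mem_filter.mp ho
    have h2 := Finset.mem_filter.mp ho'
    exact hcol o h1.1 o' h2.1 hne hsh (h1.2.trans h2.2.symm)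
  calc (s.card : ℝ) = ∑ i : Fin (2*k+1), ((s.filter (fun o => col o = i)).card : ℝ) := by
        rw [hcard]; push_cast; ring
    _ ≤ ∑ _i : Fin (2*k+1), ρ := Finset.sum_le_sum (fun i _ => hfib i)
    _ = (2*k+1) * ρ := by
        rw [Finset.sum_const, Finset.card_univ, Fintype.card_fin, nsmul_eq_mul]
        push_cast; ring
end

section
/- Let s and s' be two segments in ℝ^d through the origin, each making angle at most θ with the x-axis where sin θ ≤ σ/4 (σ ∈ (0,1)). If the projection of s onto the x-axis (σ/4)-shadows the projection of s', then s σ-shadows s'. Consequently, if a family of segments through a common point, pairwise at angle ≤ θ with sin θ ≤ σ/4, is σ-exposed, then their x-axis projections form a (σ/4)-exposed family of intervals. -/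
open InnerProductGeometry Real

/-- Projection of a subset of `ℝ^d` onto the `x`-axis (first coordinate). -/
def xProj {d : ℕ} (hd : 0 < d) (A : Set (EuclideanSpace ℝ (Fin d))) : Set ℝ :=
  (fun p => p ⟨0, hd⟩) '' A

/-- Unsigned angle between the line spanned by `u` and the line spanned by `v`. -/
noncomputable def lineAngle {d : ℕ} (u v : EuclideanSpace ℝ (Fin d)) : ℝ :=
  min (InnerProductGeometry.angle u v) (InnerProductGeometry.angle u (-v))

section Aux
open RealInnerProductSpace

lemma aux_seg_param {V : Type*} [AddCommGroup V] [Module ℝ V] {a b p : V}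
    (h0 : (0:V) ∈ segment ℝ a b) (hp : p ∈ segment ℝ a b) : ∃ c : ℝ, p = c • (b - a) := by
  obtain ⟨u, v, hu, hv, huv, h0e⟩ := h0
  obtain ⟨u', v', hu', hv', huv', hpe⟩ := hp
  refine ⟨v' - v, ?_⟩
  have h1 : u' = 1 - v' := by linarith
  have h2 : u = 1 - v := by linarith
  subst h1 h2
  calc p = (1 - v') • a + v' • b - ((1 - v) • a + v • b) := by rw [hpe, h0e, sub_zero]
    _ = (v' - v) • (b - a) := by module

lemma aux_orth_sq {V : Type*} [NormedAddCommGroup V] [InnerProductSpace ℝ V] {e : V} (w : V)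
    (he : ‖e‖ = 1) : ‖w - ⟪w, e⟫ • e‖ ^ 2 = ‖w‖ ^ 2 - ⟪w, e⟫ ^ 2 := by
  rw [norm_sub_sq_real, real_inner_smul_right, norm_smul, he]
  simp [abs_mul_abs_self]
  ring

lemma aux_sin_angle_le {V : Type*} [NormedAddCommGroup V] [InnerProductSpace ℝ V] {v e : V}
    {θ : ℝ} (hθπ : θ ≤ π / 2)
    (h : min (angle v e) (angle v (-e)) ≤ θ) : Real.sin (angle v e) ≤ Real.sin θ := by
  rcases min_le_iff.mp h with h | h
  · exact Real.sin_le_sin_of_le_of_le_pi_div_two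
      (by linarith [angle_nonneg v e, Real.pi_pos]) hθπ h
  · have h2 : angle v e = π - angle v (-e) := by rw [angle_neg_right]; ring
    rw [h2, Real.sin_pi_sub]
    exact Real.sin_le_sin_of_le_of_le_pi_div_two
      (by linarith [angle_nonneg v (-e), Real.pi_pos]) hθπ h

lemma aux_proj_bound {V : Type*} [NormedAddCommGroup V] [InnerProductSpace ℝ V] {e v w : V}
    {θ : ℝ} (he : ‖e‖ = 1) (hθ0 : 0 ≤ θ) (hθπ : θ ≤ π / 2)
    (hang : min (angle v e) (angle v (-e)) ≤ θ) (c : ℝ) (hw : w = c • v) :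
    ‖w - ⟪w, e⟫ • e‖ ≤ Real.sin θ * ‖w‖ := by
  have hsθ : 0 ≤ Real.sin θ := Real.sin_nonneg_of_nonneg_of_le_pi hθ0
    (by linarith [Real.pi_pos])
  by_cases hw0 : w = 0
  · simp [hw0, mul_nonneg hsθ]
  have hc : c ≠ 0 := by rintro rfl; simp at hw; exact hw0 hw
  have hsin : Real.sin (angle w e) ≤ Real.sin θ := by
    have hsw : Real.sin (angle w e) = Real.sin (angle v e) := by
      rcases hc.lt_or_gt with h | h
      · rw [hw, angle_smul_left_of_neg v e h, angle_neg_left, Real.sin_pi_sub]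
      · rw [hw, angle_smul_left_of_pos v e h]
    rw [hsw]; exact aux_sin_angle_le hθπ hang
  have hsw0 : 0 ≤ Real.sin (angle w e) :=
    Real.sin_nonneg_of_nonneg_of_le_pi (angle_nonneg w e) (angle_le_pi w e)
  have h2 : ⟪w, e⟫ = ‖w‖ * Real.cos (angle w e) := by
    have hc2 := cos_angle w e
    rw [he, mul_one] at hc2
    have hn : ‖w‖ ≠ 0 := norm_ne_zero_iff.mpr hw0
    rw [hc2]; field_simp
  have h3 : ‖w - ⟪w, e⟫ • e‖ ^ 2 = (Real.sin (angle w e) * ‖w‖) ^ 2 := by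
    rw [aux_orth_sq w he, h2]
    nlinarith [Real.sin_sq_add_cos_sq (angle w e)]
  calc ‖w - ⟪w, e⟫ • e‖ = √(‖w - ⟪w, e⟫ • e‖ ^ 2) := (Real.sqrt_sq (norm_nonneg _)).symm
    _ ≤ √((Real.sin θ * ‖w‖) ^ 2) := by
        apply Real.sqrt_le_sqrt
        rw [h3]
        exact pow_le_pow_left₀ (mul_nonneg hsw0 (norm_nonneg w))
          (mul_le_mul_of_nonneg_right hsin (norm_nonneg w)) 2
    _ = Real.sin θ * ‖w‖ := Real.sqrt_sq (mul_nonneg hsθ (norm_nonneg _))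

lemma aux_norm_bound {V : Type*} [NormedAddCommGroup V] [InnerProductSpace ℝ V] {e w : V}
    {θ : ℝ} (he : ‖e‖ = 1) (hθ0 : 0 ≤ θ) (hθπ : θ ≤ π / 2) (hs4 : Real.sin θ ≤ 1/4)
    (hproj : ‖w - ⟪w, e⟫ • e‖ ≤ Real.sin θ * ‖w‖) :
    ‖w‖ ≤ (16/15) * |⟪w, e⟫| := by
  have hsθ : 0 ≤ Real.sin θ := Real.sin_nonneg_of_nonneg_of_le_pi hθ0 (by linarith [Real.pi_pos])
  have h1 := aux_orth_sq w he
  have h2 : ‖w‖ ^ 2 ≤ ⟪w, e⟫ ^ 2 + (1/16) * ‖w‖ ^ 2 := by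
    have hss : Real.sin θ ^ 2 ≤ 1/16 := by nlinarith
    nlinarith [pow_le_pow_left₀ (norm_nonneg (w - ⟪w, e⟫ • e)) hproj 2, sq_nonneg ‖w‖,
      mul_le_mul_of_nonneg_right hss (sq_nonneg ‖w‖)]
  calc ‖w‖ = √(‖w‖ ^ 2) := (Real.sqrt_sq (norm_nonneg _)).symm
    _ ≤ √(((16/15) * |⟪w, e⟫|) ^ 2) := by
        apply Real.sqrt_le_sqrt
        nlinarith [sq_abs ⟪w, e⟫, abs_nonneg ⟪w, e⟫]
    _ = (16/15) * |⟪w, e⟫| := Real.sqrt_sq (by positivity)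

lemma aux_key (d : ℕ) (hd : 0 < d) (σ θ : ℝ) (hσ0 : 0 < σ) (hσ1 : σ < 1)
    (hθ0 : 0 ≤ θ) (hθπ : θ < π / 2) (hsin : Real.sin θ ≤ σ / 4)
    (a b a' b' : EuclideanSpace ℝ (Fin d))
    (h0 : (0 : EuclideanSpace ℝ (Fin d)) ∈ segment ℝ a b)
    (h0' : (0 : EuclideanSpace ℝ (Fin d)) ∈ segment ℝ a' b')
    (hang : min (angle (b - a) (EuclideanSpace.single ⟨0, hd⟩ (1:ℝ)))
      (angle (b - a) (-EuclideanSpace.single ⟨0, hd⟩ (1:ℝ))) ≤ θ)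
    (hang' : min (angle (b' - a') (EuclideanSpace.single ⟨0, hd⟩ (1:ℝ)))
      (angle (b' - a') (-EuclideanSpace.single ⟨0, hd⟩ (1:ℝ))) ≤ θ)
    (hsh : ∀ x ∈ (fun p : EuclideanSpace ℝ (Fin d) => p ⟨0, hd⟩) '' (segment ℝ a' b'),
      Metric.infDist x ((fun p : EuclideanSpace ℝ (Fin d) => p ⟨0, hd⟩) '' (segment ℝ a b)) ≤
        σ / 4 * Metric.diam ((fun p : EuclideanSpace ℝ (Fin d) => p ⟨0, hd⟩) ''
          (segment ℝ a' b'))) :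
    ∀ p ∈ segment ℝ a' b',
      Metric.infDist p (segment ℝ a b) ≤ σ * Metric.diam (segment ℝ a' b') := by
  intro p hp
  have hπ := Real.pi_pos
  set i0 : Fin d := ⟨0, hd⟩ with hi0
  set e : EuclideanSpace ℝ (Fin d) := EuclideanSpace.single i0 (1:ℝ) with he_def
  have he : ‖e‖ = 1 := by simp [he_def]
  have hsθ0 : 0 ≤ Real.sin θ := Real.sin_nonneg_of_nonneg_of_le_pi hθ0 (by linarith)
  have hinner : ∀ w : EuclideanSpace ℝ (Fin d), ⟪w, e⟫ = w i0 := by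
    intro w; simp [he_def, EuclideanSpace.inner_single_right]
  have hcs : IsCompact (segment ℝ a b) := by
    rw [segment_eq_image ℝ a b]; exact isCompact_Icc.image (by fun_prop)
  have hcs' : IsCompact (segment ℝ a' b') := by
    rw [segment_eq_image ℝ a' b']; exact isCompact_Icc.image (by fun_prop)
  have hbd' := hcs'.isBounded
  set D := Metric.diam (segment ℝ a' b') with hD
  have hD0 : 0 ≤ D := Metric.diam_nonneg
  have hlip : ∀ u w : EuclideanSpace ℝ (Fin d), dist (u i0) (w i0) ≤ dist u w := by
    intro u w
    rw [Real.dist_eq, dist_eq_norm]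
    calc |u i0 - w i0| = |⟪u - w, e⟫| := by rw [hinner]; simp
      _ ≤ ‖u - w‖ * ‖e‖ := abs_real_inner_le_norm _ _
      _ = ‖u - w‖ := by rw [he, mul_one]
  have hdiam_proj :
      Metric.diam ((fun q : EuclideanSpace ℝ (Fin d) => q i0) '' (segment ℝ a' b')) ≤ D := by
    apply Metric.diam_le_of_forall_dist_le hD0
    rintro x ⟨u, hu, rfl⟩ y ⟨w, hw, rfl⟩
    exact (hlip u w).trans (Metric.dist_le_diam_of_mem hbd' hu hw)
  have h1 := hsh (p i0) ⟨p, hp, rfl⟩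
  have hcproj : IsCompact ((fun q : EuclideanSpace ℝ (Fin d) => q i0) '' (segment ℝ a b)) :=
    hcs.image (EuclideanSpace.proj (𝕜 := ℝ) i0).continuous
  obtain ⟨y, hy, hyd⟩ := hcproj.exists_infDist_eq_dist ⟨_, ⟨0, h0, rfl⟩⟩ (p i0)
  obtain ⟨q, hq, rfl⟩ := hy
  obtain ⟨cp, hcp⟩ := aux_seg_param h0' hp
  obtain ⟨cq, hcq⟩ := aux_seg_param h0 hq
  have hpo : ‖p - ⟪p, e⟫ • e‖ ≤ Real.sin θ * ‖p‖ :=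
    aux_proj_bound he hθ0 hθπ.le hang' cp hcp
  have hqo : ‖q - ⟪q, e⟫ • e‖ ≤ Real.sin θ * ‖q‖ :=
    aux_proj_bound he hθ0 hθπ.le hang cq hcq
  have hqn : ‖q‖ ≤ (16/15) * |⟪q, e⟫| :=
    aux_norm_bound he hθ0 hθπ.le (by linarith) hqo
  have hpD : ‖p‖ ≤ D := by
    have := Metric.dist_le_diam_of_mem hbd' hp h0'
    rwa [dist_zero_right] at this
  have hpi : |p i0| ≤ D := by
    have h2 : |⟪p, e⟫| ≤ ‖p‖ * ‖e‖ := abs_real_inner_le_norm _ _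
    rw [hinner, he, mul_one] at h2
    exact h2.trans hpD
  have hd1 : dist (p i0) (q i0) ≤ σ / 4 * D := by
    rw [← hyd]
    exact h1.trans (mul_le_mul_of_nonneg_left hdiam_proj (by positivity))
  have hd1' : |p i0 - q i0| ≤ σ / 4 * D := by rwa [Real.dist_eq] at hd1
  have hqi : |q i0| ≤ (5/4) * D := by
    have h3 := abs_sub_abs_le_abs_sub (q i0) (p i0)
    have h4 : |q i0 - p i0| = |p i0 - q i0| := abs_sub_comm _ _
    have : σ / 4 * D ≤ 1 / 4 * D := by nlinarith
    linarith
  have hqD : ‖q‖ ≤ (4/3) * D := by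
    have h5 : (16/15 : ℝ) * |⟪q, e⟫| ≤ (16/15) * ((5/4) * D) := by
      rw [hinner]
      exact mul_le_mul_of_nonneg_left hqi (by norm_num)
    linarith
  have hfinal : dist p q ≤ σ * D := by
    have t1 : p - q = (p - ⟪p, e⟫ • e) + (⟪p, e⟫ • e - ⟪q, e⟫ • e) + (⟪q, e⟫ • e - q) := by
      abel
    have step : ‖p - q‖ ≤ ‖p - ⟪p, e⟫ • e‖ + |p i0 - q i0| + ‖q - ⟪q, e⟫ • e‖ := by
      calc ‖p - q‖ ≤ ‖p - ⟪p, e⟫ • e‖ + ‖⟪p, e⟫ • e - ⟪q, e⟫ • e‖ + ‖⟪q, e⟫ • e - q‖ := by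
            rw [t1]; exact norm_add₃_le
        _ = ‖p - ⟪p, e⟫ • e‖ + |p i0 - q i0| + ‖q - ⟪q, e⟫ • e‖ := by
            rw [← sub_smul, norm_smul, he, mul_one, Real.norm_eq_abs,
              norm_sub_rev (⟪q, e⟫ • e) q, hinner p, hinner q]
    rw [dist_eq_norm]
    have m1 : Real.sin θ * ‖p‖ ≤ σ / 4 * D :=
      mul_le_mul hsin hpD (norm_nonneg p) (by positivity)
    have m2 : Real.sin θ * ‖q‖ ≤ σ / 4 * ((4/3) * D) :=
      mul_le_mul hsin hqD (norm_nonneg q) (by positivity)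
    have m3 : 0 ≤ σ * D := mul_nonneg hσ0.le hD0
    linarith
  calc Metric.infDist p (segment ℝ a b) ≤ dist p q := Metric.infDist_le_dist_of_mem hq
    _ ≤ σ * D := hfinal

end Aux

/-- For segments through the origin making angle at most `θ` with the `x`-axis, where
`sin θ ≤ σ/4`: if the `x`-projection of `s` `(σ/4)`-shadows the projection of `s'`, then `s`
`σ`-shadows `s'`. Consequently, the projections of a `σ`-exposed family of such segments
form a `(σ/4)`-exposed family of intervals. -/
theorem stmt8 (d : ℕ) (hd : 0 < d) (σ θ : ℝ) (hσ0 : 0 < σ) (hσ1 : σ < 1)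
    (hθ0 : 0 ≤ θ) (hθπ : θ < π / 2) (hsin : Real.sin θ ≤ σ / 4) :
    (∀ a b a' b' : EuclideanSpace ℝ (Fin d),
      (0 : EuclideanSpace ℝ (Fin d)) ∈ segment ℝ a b →
      (0 : EuclideanSpace ℝ (Fin d)) ∈ segment ℝ a' b' →
      lineAngle (b - a) (EuclideanSpace.single ⟨0, hd⟩ (1:ℝ)) ≤ θ →
      lineAngle (b' - a') (EuclideanSpace.single ⟨0, hd⟩ (1:ℝ)) ≤ θ →
      Shadows (σ / 4) (xProj hd (segment ℝ a b)) (xProj hd (segment ℝ a' b')) →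
      Shadows σ (segment ℝ a b) (segment ℝ a' b')) ∧
    (∀ (n : ℕ) (a b : Fin n → EuclideanSpace ℝ (Fin d)),
      (∀ i, (0 : EuclideanSpace ℝ (Fin d)) ∈ segment ℝ (a i) (b i)) →
      (∀ i, lineAngle (b i - a i) (EuclideanSpace.single ⟨0, hd⟩ (1:ℝ)) ≤ θ) →
      (∀ i j, i ≠ j → ¬ Shadows σ (segment ℝ (a i) (b i)) (segment ℝ (a j) (b j))) →
      ∀ i j, i ≠ j →
        ¬ Shadows (σ / 4) (xProj hd (segment ℝ (a i) (b i)))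
            (xProj hd (segment ℝ (a j) (b j)))) := by
  constructor
  · intro a b a' b' h0 h0' hg hg' hsh
    exact aux_key d hd σ θ hσ0 hσ1 hθ0 hθπ hsin a b a' b' h0 h0' hg hg' hsh
  · intro n a b h0 hg hns i j hij hsh
    exact hns i j hij
      (aux_key d hd σ θ hσ0 hσ1 hθ0 hθπ hsin _ _ _ _ (h0 i) (h0 j) (hg i) (hg j) hsh)
end

section
/- Let L be a σ-exposed family of segments in ℝ^d all containing a common point, such that the angle between any two segments is at most θ with sin θ ≤ σ/4. Then |L| = O(1/σ²). -/
open InnerProductGeometry Real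

section Aux
open RealInnerProductSpace

variable {E : Type*} [NormedAddCommGroup E] [InnerProductSpace ℝ E]

lemma seg_param (a b p : E) (t : ℝ) (ht0 : 0 ≤ t) (ht1 : t ≤ 1)
    (hp : p = a + t • (b - a)) :
    segment ℝ a b = (fun s : ℝ => p + s • (b - a)) '' Set.Icc (-t) (-t + 1) := by
  rw [segment_eq_image']
  ext x
  simp only [Set.mem_image, Set.mem_Icc]
  constructor
  · rintro ⟨θ, ⟨h1, h2⟩, rfl⟩
    exact ⟨θ - t, ⟨by linarith, by linarith⟩, by rw [hp]; module⟩
  · rintro ⟨s, ⟨h1, h2⟩, rfl⟩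
    exact ⟨s + t, ⟨by linarith, by linarith⟩, by rw [hp]; module⟩

lemma seg_param_neg (a b p : E) (t : ℝ) (ht0 : 0 ≤ t) (ht1 : t ≤ 1)
    (hp : p = a + t • (b - a)) :
    segment ℝ a b = (fun s : ℝ => p + s • (a - b)) '' Set.Icc (t - 1) (t - 1 + 1) := by
  rw [segment_eq_image']
  ext x
  simp only [Set.mem_image, Set.mem_Icc]
  constructor
  · rintro ⟨θ, ⟨h1, h2⟩, rfl⟩
    exact ⟨t - θ, ⟨by linarith, by linarith⟩, by rw [hp]; module⟩
  · rintro ⟨s, ⟨h1, h2⟩, rfl⟩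
    exact ⟨t - s, ⟨by linarith, by linarith⟩, by rw [hp]; module⟩

lemma clamp_key (σ s ci cj Ai Aj mj : ℝ) (hσ0 : 0 < σ)
    (hci0 : 0 < ci) (hcj0 : 0 < cj) (horder : cj ≤ ci) (hcjle : cj ≤ mj)
    (hAi1 : -1 ≤ Ai) (hAi0 : Ai ≤ 0) (hAj0 : Aj ≤ 0)
    (hs1 : Aj ≤ s) (hs2 : s ≤ Aj + 1) (hA : |Ai - Aj| ≤ σ / 4) :
    |s * cj - (max Ai (min (Ai + 1) (s * cj / ci))) * ci| ≤ σ / 4 * mj ∧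
    |max Ai (min (Ai + 1) (s * cj / ci))| * ci ≤ |s| * cj := by
  have hmj0 : 0 < mj := lt_of_lt_of_le hcj0 hcjle
  have hAineq := abs_le.mp hA
  set x0 : ℝ := s * cj / ci with hx0_def
  set t : ℝ := max Ai (min (Ai + 1) x0) with ht_def
  rcases le_or_gt x0 (Ai + 1) with h1 | h1
  · rcases le_or_gt Ai x0 with h2 | h2
    · -- t = x0
      have ht : t = x0 := by rw [ht_def, min_eq_right h1, max_eq_right h2]
      have htc : t * ci = s * cj := by rw [ht, hx0_def]; field_simp
      constructor
      · rw [htc]; simp; positivity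
      · rw [ht, hx0_def, abs_div, abs_mul, abs_of_pos hci0, abs_of_pos hcj0,
          div_mul_cancel₀ _ (ne_of_gt hci0)]
    · -- t = Ai
      have ht : t = Ai := by
        rw [ht_def, min_eq_right (by linarith : x0 ≤ Ai + 1), max_eq_left h2.le]
      have hscj : s * cj < Ai * ci := (div_lt_iff₀ hci0).mp h2
      have hlow : Aj * cj ≤ s * cj := mul_le_mul_of_nonneg_right hs1 hcj0.le
      constructor
      · rw [ht, abs_sub_comm, abs_of_nonneg (by linarith)]
        linarith [mul_nonneg (neg_nonneg.mpr hAi0) (sub_nonneg.mpr horder),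
          mul_le_mul_of_nonneg_right hAineq.2 hcj0.le,
          mul_nonneg (by linarith : (0:ℝ) ≤ σ / 4) (sub_nonneg.mpr hcjle)]
      · have hsc0 : s * cj < 0 :=
          lt_of_lt_of_le hscj (mul_nonpos_of_nonpos_of_nonneg hAi0 hci0.le)
        have hs0 : s < 0 := by nlinarith
        rw [ht, abs_of_nonpos hAi0, abs_of_neg hs0]
        linarith
  · -- t = Ai + 1
    have ht : t = Ai + 1 := by
      rw [ht_def, min_eq_left h1.le, max_eq_right (by linarith : Ai ≤ Ai + 1)]
    have hscj : (Ai + 1) * ci < s * cj := (lt_div_iff₀ hci0).mp h1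
    have hup : s * cj ≤ (Aj + 1) * cj := mul_le_mul_of_nonneg_right hs2 hcj0.le
    constructor
    · rw [ht, abs_of_nonneg (by linarith)]
      linarith [mul_nonneg (by linarith : (0:ℝ) ≤ Ai + 1) (sub_nonneg.mpr horder),
        mul_le_mul_of_nonneg_right (by linarith [hAineq.1] : Aj - Ai ≤ σ / 4) hcj0.le,
        mul_nonneg (by linarith : (0:ℝ) ≤ σ / 4) (sub_nonneg.mpr hcjle)]
    · have h0 : 0 ≤ (Ai + 1) * ci := mul_nonneg (by linarith) hci0.le
      have hs0 : 0 < s := by nlinarith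
      rw [ht, abs_of_nonneg (by linarith : (0:ℝ) ≤ Ai + 1), abs_of_pos hs0]
      linarith

variable {E : Type*} [NormedAddCommGroup E] [InnerProductSpace ℝ E]

set_option maxHeartbeats 1000000 in
lemma shadow_core (σ cθ sθ : ℝ) (hσ0 : 0 < σ)
    (hsθ0 : 0 ≤ sθ) (hsθ : sθ ≤ σ / 4) (hcθ : 1/2 ≤ cθ)
    (hpyth : 1 ≤ cθ ^ 2 + sθ ^ 2)
    (p u gi gj : E) (Ai Aj : ℝ)
    (hu : ‖u‖ = 1) (hgi : gi ≠ 0) (hgj : gj ≠ 0)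
    (hAi1 : -1 ≤ Ai) (hAi0 : Ai ≤ 0) (hAj1 : -1 ≤ Aj) (hAj0 : Aj ≤ 0)
    (hci : ‖gi‖ * cθ ≤ ⟪gi, u⟫) (hcj : ‖gj‖ * cθ ≤ ⟪gj, u⟫)
    (hA : |Ai - Aj| ≤ σ / 4) (horder : ⟪gj, u⟫ ≤ ⟪gi, u⟫) :
    Shadows σ ((fun s : ℝ => p + s • gi) '' Set.Icc Ai (Ai + 1))
      ((fun s : ℝ => p + s • gj) '' Set.Icc Aj (Aj + 1)) := by
  have hmi : (0:ℝ) < ‖gi‖ := norm_pos_iff.mpr hgi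
  have hmj : (0:ℝ) < ‖gj‖ := norm_pos_iff.mpr hgj
  have hcθ0 : (0:ℝ) < cθ := by linarith
  set ci := ⟪gi, u⟫ with hci_def
  set cj := ⟪gj, u⟫ with hcj_def
  have hci0 : 0 < ci := lt_of_lt_of_le (by positivity) hci
  have hcj0 : 0 < cj := lt_of_lt_of_le (by positivity) hcj
  have hcjle : cj ≤ ‖gj‖ := by
    have := real_inner_le_norm gj u
    rwa [hu, mul_one] at this
  -- perpendicular part bound
  have perp : ∀ g : E, 0 < ‖g‖ → ‖g‖ * cθ ≤ ⟪g, u⟫ → ‖g - ⟪g, u⟫ • u‖ ≤ ‖g‖ * sθ := by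
    intro g hg hgc
    have h1 : ⟪g, ⟪g, u⟫ • u⟫ = ⟪g, u⟫ * ⟪g, u⟫ := by rw [real_inner_smul_right]
    have h2 : ‖⟪g, u⟫ • u‖ = |⟪g, u⟫| := by
      rw [norm_smul, hu, mul_one, Real.norm_eq_abs]
    have hsq : ‖g - ⟪g, u⟫ • u‖ ^ 2 = ‖g‖ ^ 2 - ⟪g, u⟫ ^ 2 := by
      rw [norm_sub_sq_real, h1, h2, sq_abs]; ring
    have hgc0 : 0 ≤ ⟪g, u⟫ := le_trans (by positivity) hgc
    have hsq2 : ‖g - ⟪g, u⟫ • u‖ ^ 2 ≤ (‖g‖ * sθ) ^ 2 := by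
      rw [hsq]
      nlinarith [mul_self_le_mul_self (by positivity : (0:ℝ) ≤ ‖g‖ * cθ) hgc,
        mul_le_mul_of_nonneg_left hpyth (sq_nonneg ‖g‖)]
    have := Real.sqrt_le_sqrt hsq2
    rwa [Real.sqrt_sq (norm_nonneg _), Real.sqrt_sq (by positivity)] at this
  have hperpj : ‖gj - cj • u‖ ≤ ‖gj‖ * sθ := perp gj hmj hcj
  have hperpi : ‖gi - ci • u‖ ≤ ‖gi‖ * sθ := perp gi hmi hci
  intro q hq
  obtain ⟨s, hs, rfl⟩ := hq
  simp only [Set.mem_Icc] at hs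
  have hsabs : |s| ≤ 1 := abs_le.mpr ⟨by linarith [hs.1], by linarith [hs.2]⟩
  set t : ℝ := max Ai (min (Ai + 1) (s * cj / ci)) with ht_def
  have htmem : t ∈ Set.Icc Ai (Ai + 1) :=
    ⟨le_max_left _ _, max_le (by linarith) (min_le_left _ _)⟩
  have hxmem : p + t • gi ∈ (fun s : ℝ => p + s • gi) '' Set.Icc Ai (Ai + 1) :=
    ⟨t, htmem, rfl⟩
  have hkey := clamp_key σ s ci cj Ai Aj ‖gj‖ hσ0 hci0 hcj0 horder hcjle
    hAi1 hAi0 hAj0 hs.1 hs.2 hA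
  rw [← ht_def] at hkey
  clear_value t
  -- norm decomposition
  have hdecomp : s • gj - t • gi
      = (s * cj - t * ci) • u + (s • (gj - cj • u) - t • (gi - ci • u)) := by
    rw [hci_def, hcj_def]; module
  have e1 : ‖(s * cj - t * ci) • u‖ = |s * cj - t * ci| := by
    rw [norm_smul, hu, mul_one, Real.norm_eq_abs]
  have e2 : ‖s • (gj - cj • u) - t • (gi - ci • u)‖
      ≤ |s| * ‖gj - cj • u‖ + |t| * ‖gi - ci • u‖ := by
    refine (norm_sub_le _ _).trans ?_
    rw [norm_smul, norm_smul, Real.norm_eq_abs, Real.norm_eq_abs]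
  have hnorm1 : ‖s • gj - t • gi‖ ≤ |s * cj - t * ci|
      + (|s| * ‖gj - cj • u‖ + |t| * ‖gi - ci • u‖) := by
    rw [hdecomp]
    refine (norm_add_le _ _).trans ?_
    rw [e1]
    linarith [e2]
  -- assemble
  have hmi2 : ‖gi‖ ≤ 2 * ci :=
    by linarith [mul_le_mul_of_nonneg_left hcθ hmi.le, hci]
  have htm : |t| * ‖gi‖ ≤ 2 * ‖gj‖ := by
    have h3 : |s| * cj ≤ cj := mul_le_of_le_one_left hcj0.le hsabs
    have h4 : |t| * ‖gi‖ ≤ |t| * (2 * ci) :=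
      mul_le_mul_of_nonneg_left hmi2 (abs_nonneg t)
    linarith [hkey.2, h3, h4, hcjle]
  have b1 : |s| * ‖gj - cj • u‖ ≤ ‖gj‖ * sθ :=
    le_trans (mul_le_of_le_one_left (norm_nonneg _) hsabs) hperpj
  have b2 : |t| * ‖gi - ci • u‖ ≤ 2 * ‖gj‖ * sθ := by
    have h5 : |t| * ‖gi - ci • u‖ ≤ |t| * (‖gi‖ * sθ) :=
      mul_le_mul_of_nonneg_left hperpi (abs_nonneg t)
    linarith [h5, mul_le_mul_of_nonneg_right htm hsθ0]
  have htotal : ‖s • gj - t • gi‖ ≤ σ * ‖gj‖ := by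
    have h6 : ‖gj‖ * sθ ≤ ‖gj‖ * (σ / 4) := mul_le_mul_of_nonneg_left hsθ hmj.le
    linarith [hkey.1, hnorm1, b1, b2, h6]
  -- diameter lower bound
  have hdiam : ‖gj‖ ≤ Metric.diam ((fun s : ℝ => p + s • gj) '' Set.Icc Aj (Aj + 1)) := by
    have hbd : Bornology.IsBounded ((fun s : ℝ => p + s • gj) '' Set.Icc Aj (Aj + 1)) :=
      (isCompact_Icc.image (by continuity)).isBounded
    have hy1 : p + Aj • gj ∈ (fun s : ℝ => p + s • gj) '' Set.Icc Aj (Aj + 1) :=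
      ⟨Aj, ⟨le_refl _, by linarith⟩, rfl⟩
    have hy2 : p + (Aj + 1) • gj ∈ (fun s : ℝ => p + s • gj) '' Set.Icc Aj (Aj + 1) :=
      ⟨Aj + 1, ⟨by linarith, le_refl _⟩, rfl⟩
    have hd := Metric.dist_le_diam_of_mem hbd hy1 hy2
    rw [dist_eq_norm] at hd
    have heq : (p + Aj • gj) - (p + (Aj + 1) • gj) = -gj := by module
    rwa [heq, norm_neg] at hd
  calc Metric.infDist (p + s • gj) ((fun s : ℝ => p + s • gi) '' Set.Icc Ai (Ai + 1))
      ≤ dist (p + s • gj) (p + t • gi) := Metric.infDist_le_dist_of_mem hxmem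
    _ = ‖s • gj - t • gi‖ := by rw [dist_eq_norm]; congr 1; module
    _ ≤ σ * ‖gj‖ := htotal
    _ ≤ σ * Metric.diam ((fun s : ℝ => p + s • gj) '' Set.Icc Aj (Aj + 1)) :=
        mul_le_mul_of_nonneg_left hdiam hσ0.le

end Aux

section Main
open RealInnerProductSpace

set_option maxHeartbeats 1000000 in
/-- A `σ`-exposed family of segments through a common point, pairwise at angle at most `θ`
with `sin θ ≤ σ/4`, has `O(1/σ²)` members. -/
theorem stmt9 (d : ℕ) :
    ∃ C : ℝ, 0 < C ∧
      ∀ (σ θ : ℝ), 0 < σ → σ < 1 → 0 < θ → θ < π / 2 → Real.sin θ ≤ σ / 4 →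
      ∀ (n : ℕ) (a b : Fin n → EuclideanSpace ℝ (Fin d)) (p : EuclideanSpace ℝ (Fin d)),
        (∀ i, p ∈ segment ℝ (a i) (b i)) →
        (∀ i j, i ≠ j → lineAngle (b i - a i) (b j - a j) ≤ θ) →
        (∀ i j, i ≠ j → ¬ Shadows σ (segment ℝ (a i) (b i)) (segment ℝ (a j) (b j))) →
        (n : ℝ) ≤ C / σ ^ 2 := by
  refine ⟨5, by norm_num, ?_⟩
  intro σ θ hσ0 hσ1 hθ0 hθ2 hsin n a b p hp hang hexp
  by_cases hn : n ≤ 1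
  · rw [le_div_iff₀ (pow_pos hσ0 2)]
    have h1 : (n : ℝ) ≤ 1 := by exact_mod_cast hn
    nlinarith
  push_neg at hn
  -- all segments are nondegenerate
  have hnd : ∀ i, b i - a i ≠ 0 := by
    intro i hzero
    have hba : b i = a i := by rwa [sub_eq_zero] at hzero
    have hpi : p = a i := by
      have := hp i
      rw [hba, segment_same] at this
      exact this
    obtain ⟨j, hj⟩ : ∃ j : Fin n, j ≠ i := by
      have : Nontrivial (Fin n) := Fin.nontrivial_iff_two_le.mpr hn
      exact exists_ne i
    refine hexp j i hj ?_
    intro q hq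
    rw [hba, segment_same] at hq ⊢
    simp only [Set.mem_singleton_iff] at hq
    subst hq
    rw [Metric.diam_singleton, mul_zero, ← hpi]
    exact le_of_eq (Metric.infDist_zero_of_mem (hp j))
  -- trig facts
  have hπ : (0:ℝ) < π := Real.pi_pos
  have hθπ : θ ≤ π := by linarith
  have hsθ0 : 0 ≤ Real.sin θ := Real.sin_nonneg_of_nonneg_of_le_pi hθ0.le hθπ
  have hcos0 : 0 ≤ Real.cos θ := Real.cos_nonneg_of_mem_Icc ⟨by linarith, hθ2.le⟩
  have hpyth := Real.sin_sq_add_cos_sq θ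
  have hcos : 1/2 ≤ Real.cos θ := by nlinarith
  have hcos1 : Real.cos θ ≤ 1 := Real.cos_le_one θ
  -- the common direction
  have hn0 : 0 < n := by omega
  set i0 : Fin n := ⟨0, hn0⟩ with hi0_def
  have hv0 : b i0 - a i0 ≠ 0 := hnd i0
  have hm0 : (0:ℝ) < ‖b i0 - a i0‖ := norm_pos_iff.mpr hv0
  set u : EuclideanSpace ℝ (Fin d) := ‖b i0 - a i0‖⁻¹ • (b i0 - a i0) with hu_def
  have hu : ‖u‖ = 1 := norm_smul_inv_norm hv0
  have hiu : ∀ i, ⟪b i - a i, u⟫ = ‖b i0 - a i0‖⁻¹ * ⟪b i - a i, b i0 - a i0⟫ := by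
    intro i; rw [hu_def, real_inner_smul_right]
  -- angle condition gives a lower bound on |⟪v i, u⟫|
  have hcosabs : ∀ i, ‖b i - a i‖ * Real.cos θ ≤ |⟪b i - a i, u⟫| := by
    intro i
    have hmi : (0:ℝ) < ‖b i - a i‖ := norm_pos_iff.mpr (hnd i)
    by_cases hii : i = i0
    · rw [hii]
      have h1 : ⟪b i0 - a i0, u⟫ = ‖b i0 - a i0‖ := by
        rw [hiu, real_inner_self_eq_norm_sq, pow_two, ← mul_assoc,
          inv_mul_cancel₀ hm0.ne', one_mul]
      rw [h1, abs_of_pos hm0]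
      nlinarith
    · have hl := hang i i0 hii
      rw [lineAngle] at hl
      have key : ∀ w : EuclideanSpace ℝ (Fin d), w ≠ 0 →
          InnerProductGeometry.angle (b i - a i) w ≤ θ →
          ‖b i - a i‖ * ‖w‖ * Real.cos θ ≤ ⟪b i - a i, w⟫ := by
        intro w hw hwθ
        have hnw : (0:ℝ) < ‖w‖ := norm_pos_iff.mpr hw
        have h1 : Real.cos θ ≤ Real.cos (InnerProductGeometry.angle (b i - a i) w) :=
          Real.cos_le_cos_of_nonneg_of_le_pi (angle_nonneg _ _) hθπ hwθ
        rw [cos_angle, le_div_iff₀ (mul_pos hmi hnw)] at h1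
        linarith [h1]
      rcases min_le_iff.mp hl with h | h
      · have h2 := key (b i0 - a i0) hv0 h
        have h3 : ‖b i - a i‖ * Real.cos θ ≤ ⟪b i - a i, u⟫ := by
          rw [hiu, ← sub_nonneg]
          have heq : ‖b i0 - a i0‖⁻¹ * ⟪b i - a i, b i0 - a i0⟫ - ‖b i - a i‖ * Real.cos θ
              = ‖b i0 - a i0‖⁻¹ * (⟪b i - a i, b i0 - a i0⟫
                  - ‖b i - a i‖ * ‖b i0 - a i0‖ * Real.cos θ) := by
            field_simp [hm0.ne']
          rw [heq]
          exact mul_nonneg (by positivity) (by linarith)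
        exact le_trans h3 (le_abs_self _)
      · have h2 := key (-(b i0 - a i0)) (neg_ne_zero.mpr hv0) h
        rw [norm_neg, inner_neg_right] at h2
        have h3 : ‖b i - a i‖ * Real.cos θ ≤ -⟪b i - a i, u⟫ := by
          rw [hiu, ← sub_nonneg]
          have heq : -(‖b i0 - a i0‖⁻¹ * ⟪b i - a i, b i0 - a i0⟫) - ‖b i - a i‖ * Real.cos θ
              = ‖b i0 - a i0‖⁻¹ * (-⟪b i - a i, b i0 - a i0⟫
                  - ‖b i - a i‖ * ‖b i0 - a i0‖ * Real.cos θ) := by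
            field_simp [hm0.ne']
          rw [← sub_nonneg] at h2
          rw [show -(‖b i0 - a i0‖⁻¹ * ⟪b i - a i, b i0 - a i0⟫) - ‖b i - a i‖ * Real.cos θ
              = ‖b i0 - a i0‖⁻¹ * (-⟪b i - a i, b i0 - a i0⟫
                  - ‖b i - a i‖ * ‖b i0 - a i0‖ * Real.cos θ) from heq]
          exact mul_nonneg (by positivity) (by linarith)
        exact le_trans h3 (neg_le_abs _)
  -- parametrize each segment
  have hparam : ∀ i, ∃ (g : EuclideanSpace ℝ (Fin d)) (A : ℝ),
      ‖g‖ = ‖b i - a i‖ ∧ -1 ≤ A ∧ A ≤ 0 ∧ ‖b i - a i‖ * Real.cos θ ≤ ⟪g, u⟫ ∧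
      segment ℝ (a i) (b i) = (fun s : ℝ => p + s • g) '' Set.Icc A (A + 1) := by
    intro i
    obtain ⟨t, ht, hteq⟩ : ∃ t ∈ Set.Icc (0:ℝ) 1, a i + t • (b i - a i) = p := by
      have hmem := hp i
      rw [segment_eq_image'] at hmem
      exact hmem
    have hpt : p = a i + t • (b i - a i) := hteq.symm
    by_cases hpos : 0 ≤ ⟪b i - a i, u⟫
    · refine ⟨b i - a i, -t, rfl, by linarith [ht.2], by linarith [ht.1], ?_, ?_⟩
      · have habs := hcosabs i
        rwa [abs_of_nonneg hpos] at habs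
      · have hseg := seg_param (a i) (b i) p t ht.1 ht.2 hpt
        rw [hseg]
    · refine ⟨-(b i - a i), t - 1, by rw [norm_neg], by linarith [ht.1],
        by linarith [ht.2], ?_, ?_⟩
      · have habs := hcosabs i
        rw [abs_of_neg (lt_of_not_ge hpos)] at habs
        rwa [inner_neg_left]
      · have hseg := seg_param_neg (a i) (b i) p t ht.1 ht.2 hpt
        rw [hseg]
        norm_num
  choose g A hgnorm hA1 hA0 hgcos hsegEq using hparam
  have hgne : ∀ i, g i ≠ 0 := by
    intro i h
    have hgz := hgnorm i
    rw [h, norm_zero] at hgz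
    exact (hnd i) (by rwa [eq_comm, norm_eq_zero] at hgz)
  -- bucket map
  set f : Fin n → ℤ := fun i => ⌊(-(A i)) / (σ / 4)⌋ with hf_def
  set K : ℤ := ⌊(4:ℝ) / σ⌋ with hK_def
  have hmaps : ∀ i : Fin n, i ∈ (Finset.univ : Finset (Fin n)) → f i ∈ Finset.Icc (0:ℤ) K := by
    intro i _
    rw [Finset.mem_Icc]
    constructor
    · exact Int.floor_nonneg.mpr (div_nonneg (by linarith [hA0 i]) (by linarith))
    · refine Int.floor_le_floor ?_
      rw [div_le_div_iff₀ (by linarith) hσ0]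
      nlinarith [hA1 i]
  have hinj : Set.InjOn f (Finset.univ : Finset (Fin n)) := by
    intro i _ j _ hfij
    by_contra hne
    have hfij' : ⌊(-(A i)) / (σ / 4)⌋ = ⌊(-(A j)) / (σ / 4)⌋ := hfij
    have habs : |A i - A j| ≤ σ / 4 := by
      have d1 := Int.floor_le ((-(A i)) / (σ / 4))
      have d2 := Int.lt_floor_add_one ((-(A i)) / (σ / 4))
      have d3 := Int.floor_le ((-(A j)) / (σ / 4))
      have d4 := Int.lt_floor_add_one ((-(A j)) / (σ / 4))
      rw [hfij'] at d1 d2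
      have h4 : |(-(A i)) / (σ / 4) - (-(A j)) / (σ / 4)| < 1 := by
        rw [abs_lt]; constructor <;> linarith
      rw [div_sub_div_same, abs_div, abs_of_pos (by linarith : (0:ℝ) < σ / 4),
        div_lt_one (by linarith)] at h4
      rw [show -(A i) - -(A j) = -(A i - A j) by ring, abs_neg] at h4
      linarith [h4]
    rcases le_total ⟪g j, u⟫ ⟪g i, u⟫ with ho | ho
    · refine hexp i j hne ?_
      rw [hsegEq i, hsegEq j]
      refine shadow_core σ (Real.cos θ) (Real.sin θ) hσ0 hsθ0 hsin hcos (by linarith)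
        p u (g i) (g j) (A i) (A j) hu (hgne i) (hgne j)
        (hA1 i) (hA0 i) (hA1 j) (hA0 j) ?_ ?_ habs ho
      · rw [hgnorm i]; exact hgcos i
      · rw [hgnorm j]; exact hgcos j
    · refine hexp j i (Ne.symm hne) ?_
      rw [hsegEq i, hsegEq j]
      refine shadow_core σ (Real.cos θ) (Real.sin θ) hσ0 hsθ0 hsin hcos (by linarith)
        p u (g j) (g i) (A j) (A i) hu (hgne j) (hgne i)
        (hA1 j) (hA0 j) (hA1 i) (hA0 i) ?_ ?_ (by rwa [abs_sub_comm]) ho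
      · rw [hgnorm j]; exact hgcos j
      · rw [hgnorm i]; exact hgcos i
  have hcard := Finset.card_le_card_of_injOn f hmaps hinj
  rw [Finset.card_univ, Fintype.card_fin, Int.card_Icc] at hcard
  have hK0 : (0:ℤ) ≤ K := Int.floor_nonneg.mpr (div_nonneg (by norm_num) hσ0.le)
  have hcard2 : (n : ℝ) ≤ (K : ℝ) + 1 := by
    have htn : ((K + 1 - 0).toNat : ℤ) = K + 1 := by omega
    have hn' : (n : ℤ) ≤ K + 1 := by
      rw [← htn]; exact_mod_cast hcard
    exact_mod_cast hn'
  have hKσ : (K : ℝ) * σ ≤ 4 := by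
    rw [← le_div_iff₀ hσ0]; exact Int.floor_le _
  have hK0' : (0:ℝ) ≤ (K:ℝ) := by exact_mod_cast hK0
  rw [le_div_iff₀ (pow_pos hσ0 2)]
  nlinarith [hcard2, hKσ, Nat.cast_nonneg (α := ℝ) n, hK0',
    mul_le_mul_of_nonneg_right hcard2 (sq_nonneg σ),
    mul_le_mul_of_nonneg_right hKσ hσ0.le]

end Main
end

section
/- Let L be a σ-exposed family of segments in ℝ^d (σ ∈ (0,1)) all containing a common point. Then |L| = O(1/σ^{d+2}). -/
set_option maxHeartbeats 1000000 in
lemma diam_segment_ge {E : Type*} [NormedAddCommGroup E] [NormedSpace ℝ E]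
    (x y : E) : dist x y ≤ Metric.diam (segment ℝ x y) := by
  apply Metric.dist_le_diam_of_mem ?_ (left_mem_segment ℝ x y) (right_mem_segment ℝ x y)
  apply Bornology.IsBounded.subset (Metric.isBounded_closedBall (x := x) (r := dist x y))
  rw [segment_eq_image']
  rintro z ⟨t, ⟨ht0, ht1⟩, rfl⟩
  simp only [Metric.mem_closedBall, dist_eq_norm]
  rw [add_sub_cancel_left, norm_smul, Real.norm_eq_abs, abs_of_nonneg ht0, norm_sub_rev]
  calc t * ‖x - y‖ ≤ 1 * ‖x - y‖ := by
        apply mul_le_mul_of_nonneg_right ht1 (norm_nonneg _)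
    _ = ‖x - y‖ := one_mul _

set_option maxHeartbeats 1000000 in
lemma shadow_key {E : Type*} [NormedAddCommGroup E] [NormedSpace ℝ E]
    (σ : ℝ) (hσ : 0 < σ) (p a b a' b' : E) (θ θ' : ℝ)
    (hθ0 : 0 ≤ θ) (hθ1 : θ ≤ 1) (hθ'0 : 0 ≤ θ') (hθ'1 : θ' ≤ 1)
    (hp : p = a + θ • (b - a)) (hp' : p = a' + θ' • (b' - a'))
    (hab : a ≠ b) (hab' : a' ≠ b')
    (hDD : ‖b' - a'‖ ≤ ‖b - a‖)
    (hu : ‖‖b - a‖⁻¹ • (b - a) - ‖b' - a'‖⁻¹ • (b' - a')‖ ≤ σ/4)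
    (hθθ : |θ - θ'| ≤ σ/4) :
    Shadows σ (segment ℝ a b) (segment ℝ a' b') := by
  intro q hq
  obtain ⟨D, hDdef⟩ : ∃ D : ℝ, D = ‖b - a‖ := ⟨_, rfl⟩
  obtain ⟨D', hD'def⟩ : ∃ D' : ℝ, D' = ‖b' - a'‖ := ⟨_, rfl⟩
  rw [← hDdef, ← hD'def] at hu hDD
  have hD0 : 0 < D := by
    rw [hDdef, norm_pos_iff, sub_ne_zero]; exact fun h => hab h.symm
  have hD'0 : 0 < D' := by
    rw [hD'def, norm_pos_iff, sub_ne_zero]; exact fun h => hab' h.symm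
  obtain ⟨u, hudef⟩ : ∃ u : E, u = D⁻¹ • (b - a) := ⟨_, rfl⟩
  obtain ⟨u', hu'def⟩ : ∃ u' : E, u' = D'⁻¹ • (b' - a') := ⟨_, rfl⟩
  rw [← hudef, ← hu'def] at hu
  rw [segment_eq_image'] at hq
  obtain ⟨s, ⟨hs0, hs1⟩, rfl⟩ := hq
  obtain ⟨t, htdef⟩ : ∃ t : ℝ, t = (s - θ') * D' := ⟨_, rfl⟩
  obtain ⟨c, hcdef⟩ : ∃ c : ℝ, c = max (-(θ*D)) (min t ((1-θ)*D)) := ⟨_, rfl⟩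
  have hnu : ‖u‖ = 1 := by
    rw [hudef, norm_smul, norm_inv, Real.norm_eq_abs, abs_of_pos hD0, ← hDdef]
    exact inv_mul_cancel₀ hD0.ne'
  have hcl : -(θ*D) ≤ c := hcdef ▸ le_max_left _ _
  have hcu : c ≤ (1-θ)*D := by
    rw [hcdef]
    apply max_le
    · nlinarith
    · exact min_le_right _ _
  obtain ⟨r, hrdef⟩ : ∃ r : E, r = a + (θ + c/D) • (b - a) := ⟨_, rfl⟩
  have hr : r ∈ segment ℝ a b := by
    rw [segment_eq_image']
    refine ⟨θ + c/D, ⟨?_, ?_⟩, hrdef.symm⟩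
    · have : -θ ≤ c/D := by rw [le_div_iff₀ hD0]; nlinarith
      linarith
    · have : c/D ≤ 1 - θ := by rw [div_le_iff₀ hD0]; nlinarith
      linarith
  have hr2 : r = p + (c/D) • (b - a) := by rw [hrdef, hp]; module
  have hq2 : a' + s • (b' - a') = p + (s - θ') • (b' - a') := by rw [hp']; module
  have e1 : t • u' = (s - θ') • (b' - a') := by
    rw [htdef, hu'def, smul_smul, mul_assoc, mul_inv_cancel₀ (hD'def ▸ hD'0.ne'), mul_one]
  have e2 : c • u = (c/D) • (b - a) := by
    rw [hudef, smul_smul, div_eq_mul_inv]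
  have hqr : a' + s • (b' - a') - r = t • (u' - u) + (t - c) • u := by
    rw [hr2, hq2, ← e1, ← e2]; module
  have htabs : |t| ≤ D' := by
    rw [htdef, abs_mul, abs_of_pos hD'0]
    have : |s - θ'| ≤ 1 := by rw [abs_le]; constructor <;> nlinarith
    nlinarith
  have htc : |t - c| ≤ σ/4 * D' := by
    have hta : -(θ'*D') ≤ t := by rw [htdef]; nlinarith
    have htb : t ≤ (1-θ')*D' := by rw [htdef]; nlinarith
    have habs' := abs_le.mp hθθ
    rcases le_or_gt t ((1-θ)*D) with h1 | h1
    · rcases le_or_gt (-(θ*D)) t with h2 | h2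
      · have : c = t := by rw [hcdef, min_eq_left h1, max_eq_right h2]
        rw [this, sub_self, abs_zero]; positivity
      · have : c = -(θ*D) := by rw [hcdef, min_eq_left h1, max_eq_left h2.le]
        rw [this, abs_le]
        refine ⟨by nlinarith, by nlinarith [mul_le_mul_of_nonneg_left hDD hθ0]⟩
    · have : c = (1-θ)*D := by
        rw [hcdef, min_eq_right h1.le, max_eq_right]; nlinarith
      rw [this, abs_le]
      refine ⟨by nlinarith,
        by nlinarith [mul_le_mul_of_nonneg_left hDD (by linarith : (0:ℝ) ≤ 1 - θ)]⟩
  have hdist : dist (a' + s • (b' - a')) r ≤ σ/2 * D' := by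
    rw [dist_eq_norm, hqr]
    calc ‖t • (u' - u) + (t - c) • u‖ ≤ ‖t • (u' - u)‖ + ‖(t - c) • u‖ := norm_add_le _ _
      _ = |t| * ‖u' - u‖ + |t - c| * ‖u‖ := by
          rw [norm_smul, norm_smul, Real.norm_eq_abs, Real.norm_eq_abs]
      _ ≤ D' * (σ/4) + σ/4 * D' * 1 := by
          apply add_le_add
          · apply mul_le_mul htabs ?_ (norm_nonneg _) hD'0.le
            rw [norm_sub_rev]; exact hu
          · exact mul_le_mul htc (le_of_eq hnu) (norm_nonneg _) (by positivity)
      _ = σ/2 * D' := by ring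
  calc Metric.infDist (a' + s • (b' - a')) (segment ℝ a b)
      ≤ dist (a' + s • (b' - a')) r := Metric.infDist_le_dist_of_mem hr
    _ ≤ σ/2 * D' := hdist
    _ ≤ σ * D' := by nlinarith
    _ ≤ σ * Metric.diam (segment ℝ a' b') := by
        apply mul_le_mul_of_nonneg_left ?_ hσ.le
        calc D' = dist a' b' := by rw [hD'def, dist_eq_norm, norm_sub_rev]
          _ ≤ _ := diam_segment_ge a' b'

set_option maxHeartbeats 1000000 in
/-- A `σ`-exposed family of segments in `ℝ^d` all containing a common point has
`O(1/σ^(d+2))` members. -/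
theorem stmt10 (d : ℕ) :
    ∃ C : ℝ, 0 < C ∧
      ∀ (σ : ℝ), 0 < σ → σ < 1 →
      ∀ (n : ℕ) (a b : Fin n → EuclideanSpace ℝ (Fin d)) (p : EuclideanSpace ℝ (Fin d)),
        (∀ i, p ∈ segment ℝ (a i) (b i)) →
        (∀ i j, i ≠ j → ¬ Shadows σ (segment ℝ (a i) (b i)) (segment ℝ (a j) (b j))) →
        (n : ℝ) ≤ C / σ ^ (d + 2) := by
  refine ⟨6 * (11*(d+1))^d, by positivity, ?_⟩
  intro σ hσ0 hσ1 n a b p hp hexp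
  have hC1 : (1:ℝ) ≤ 6 * (11*(d+1))^d := by
    have : (1:ℝ) ≤ (11*(d+1))^d := one_le_pow₀ (by push_cast; nlinarith [Nat.cast_nonneg (α := ℝ) d])
    nlinarith
  have hσp : 0 < σ ^ (d+2) := pow_pos hσ0 _
  have hσp1 : σ ^ (d+2) ≤ 1 := pow_le_one₀ hσ0.le hσ1.le
  by_cases hn : n ≤ 1
  · calc (n:ℝ) ≤ 1 := by exact_mod_cast hn
      _ ≤ 6 * (11*(d+1))^d / σ ^ (d+2) := by
          rw [le_div_iff₀ hσp]; nlinarith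
  · push_neg at hn
    -- all segments nondegenerate
    have hnd : ∀ i, a i ≠ b i := by
      intro i hi
      obtain ⟨j, hj⟩ : ∃ j : Fin n, j ≠ i := by
        by_cases h : (i : ℕ) = 0
        · exact ⟨⟨1, by omega⟩, fun hc => by apply_fun Fin.val at hc; simp at hc; omega⟩
        · exact ⟨⟨0, by omega⟩, fun hc => by apply_fun Fin.val at hc; simp at hc; omega⟩
      apply hexp j i hj
      intro q hq
      have hseg : segment ℝ (a i) (b i) = {a i} := by rw [← hi, segment_same]
      rw [hseg] at hq
      have hpi : p = a i := by
        have := hp i; rw [hseg] at this; simpa using this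
      rcases hq with rfl
      rw [hseg, Metric.diam_singleton, mul_zero, ← hpi]
      rw [Metric.infDist_zero_of_mem (hp j)]
    -- parametrization
    have hθex : ∀ i, ∃ t : ℝ, 0 ≤ t ∧ t ≤ 1 ∧ p = a i + t • (b i - a i) := by
      intro i
      obtain ⟨x, y, hx, hy, hxy, h⟩ := hp i
      refine ⟨y, hy, by linarith, ?_⟩
      have hx' : x = 1 - y := by linarith
      rw [← h, hx']; module
    choose θ hθ0 hθ1 hpθ using hθex
    obtain ⟨D, hDdef⟩ : ∃ D : Fin n → ℝ, D = fun i => ‖b i - a i‖ := ⟨_, rfl⟩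
    obtain ⟨u, hudef⟩ : ∃ u : Fin n → EuclideanSpace ℝ (Fin d),
        u = fun i => (D i)⁻¹ • (b i - a i) := ⟨_, rfl⟩
    have hD0 : ∀ i, 0 < D i := by
      intro i; rw [hDdef]; simp only [norm_pos_iff, sub_ne_zero]
      exact fun h => hnd i h.symm
    have hD0' : ∀ i, 0 < ‖b i - a i‖ := by
      intro i; rw [norm_pos_iff, sub_ne_zero]; exact fun h => hnd i h.symm
    have hnu : ∀ i, ‖u i‖ = 1 := by
      intro i
      rw [hudef, hDdef]
      simp only
      rw [norm_smul, norm_inv, norm_norm]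
      exact inv_mul_cancel₀ (hD0' i).ne'
    have hcoord : ∀ i k, |u i k| ≤ 1 := by
      intro i k
      have h2 : |u i k|^2 ≤ ‖u i‖^2 := by
        rw [EuclideanSpace.norm_eq, Real.sq_sqrt (by positivity)]
        calc |u i k|^2 = ‖u i k‖^2 := by rw [Real.norm_eq_abs]
          _ ≤ ∑ m, ‖u i m‖^2 := Finset.single_le_sum (f := fun m => ‖u i m‖^2)
              (fun m _ => by positivity) (Finset.mem_univ k)
      rw [hnu i] at h2
      nlinarith [abs_nonneg (u i k)]
    obtain ⟨w, hwdef⟩ : ∃ w : ℝ, w = σ / (4*(d+1)) := ⟨_, rfl⟩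
    have hw0 : 0 < w := by rw [hwdef]; positivity
    obtain ⟨M, hMdef⟩ : ∃ M : ℤ, M = ⌈(4*(d+1):ℝ)/σ⌉ := ⟨_, rfl⟩
    obtain ⟨K, hKdef⟩ : ∃ K : ℤ, K = ⌈(4:ℝ)/σ⌉ := ⟨_, rfl⟩
    classical
    obtain ⟨f, hfdef⟩ : ∃ f : Fin n → (Fin d → ℤ) × ℤ,
        f = fun i => (fun k => ⌊u i k / w⌋, ⌊θ i * (4/σ)⌋) := ⟨_, rfl⟩
    -- injectivity
    have hinj : Function.Injective f := by
      intro i j hij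
      by_contra hne
      have h1 : ∀ k, |u i k - u j k| < w := by
        intro k
        have := congrArg (fun g => g.1 k) hij
        simp only [hfdef] at this
        have h2 := Int.abs_sub_lt_one_of_floor_eq_floor this
        rw [div_sub_div_same, abs_div, abs_of_pos hw0, div_lt_one hw0] at h2
        exact h2
      have hclose : ∀ (i' j' : Fin n), (∀ k, |u i' k - u j' k| < w) →
          ‖u i' - u j'‖ ≤ σ/4 := by
        intro i' j' h
        rw [EuclideanSpace.norm_eq]
        have hsum : ∑ k, ‖(u i' - u j') k‖^2 ≤ (d:ℝ) * w^2 := by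
          calc ∑ k, ‖(u i' - u j') k‖^2 ≤ ∑ _k : Fin d, w^2 := by
                apply Finset.sum_le_sum
                intro k _
                have : (u i' - u j') k = u i' k - u j' k := rfl
                rw [this, Real.norm_eq_abs, sq_abs]
                nlinarith [h k, abs_nonneg (u i' k - u j' k), abs_le.mp (le_of_lt (h k))]
              _ = (d:ℝ) * w^2 := by rw [Finset.sum_const]; simp [mul_comm]
        calc √(∑ k, ‖(u i' - u j') k‖^2) ≤ √((d:ℝ) * w^2) := Real.sqrt_le_sqrt hsum
          _ ≤ √((σ/4)^2) := by
              apply Real.sqrt_le_sqrt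
              rw [hwdef, div_pow, mul_div_assoc']
              rw [div_le_iff₀ (by positivity)]
              have h1 : (d:ℝ) ≤ ((d:ℝ)+1)^2 := by nlinarith [Nat.cast_nonneg (α := ℝ) d]
              nlinarith [mul_le_mul_of_nonneg_right h1 (sq_nonneg σ)]
          _ = σ/4 := Real.sqrt_sq (by positivity)
      have hθclose : |θ i - θ j| ≤ σ/4 := by
        have := congrArg (fun g => g.2) hij
        simp only [hfdef] at this
        have h2 := Int.abs_sub_lt_one_of_floor_eq_floor this
        rw [← sub_mul, abs_mul, abs_of_pos (by positivity : (0:ℝ) < 4/σ)] at h2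
        rw [← lt_div_iff₀ (by positivity : (0:ℝ) < 4/σ)] at h2
        have : (1:ℝ) / (4/σ) = σ/4 := by field_simp
        linarith [this ▸ h2.le]
      have huij : ‖‖b i - a i‖⁻¹ • (b i - a i) - ‖b j - a j‖⁻¹ • (b j - a j)‖ ≤ σ/4 := by
        have := hclose i j h1; simp only [hudef, hDdef] at this; exact this
      rcases le_total (D j) (D i) with hDle | hDle
      · apply hexp i j hne
        apply shadow_key σ hσ0 p (a i) (b i) (a j) (b j) (θ i) (θ j)
          (hθ0 i) (hθ1 i) (hθ0 j) (hθ1 j) (hpθ i) (hpθ j) (hnd i) (hnd j)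
          (by simp only [hDdef] at hDle; exact hDle) ?_ hθclose
        exact huij
      · apply hexp j i (Ne.symm hne)
        apply shadow_key σ hσ0 p (a j) (b j) (a i) (b i) (θ j) (θ i)
          (hθ0 j) (hθ1 j) (hθ0 i) (hθ1 i) (hpθ j) (hpθ i) (hnd j) (hnd i)
          (by simp only [hDdef] at hDle; exact hDle) ?_ (by rw [abs_sub_comm]; exact hθclose)
        have := hclose j i (fun k => by rw [abs_sub_comm]; exact h1 k)
        simp only [hudef, hDdef] at this; exact this
    -- membership
    have hM0 : 0 ≤ M := by
      rw [hMdef]; exact Int.ceil_nonneg (div_nonneg (by positivity) hσ0.le)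
    have hK0 : 0 ≤ K := by rw [hKdef]; exact Int.ceil_nonneg (div_nonneg (by norm_num) hσ0.le)
    obtain ⟨T, hTdef⟩ : ∃ T : Finset ((Fin d → ℤ) × ℤ),
        T = (Fintype.piFinset fun _ : Fin d => Finset.Icc (-M) M) ×ˢ Finset.Icc 0 K := ⟨_, rfl⟩
    have hmem : ∀ i, f i ∈ T := by
      intro i
      rw [hTdef, hfdef, Finset.mem_product]
      constructor
      · rw [Fintype.mem_piFinset]
        intro k
        rw [Finset.mem_Icc]
        have hb : |u i k / w| ≤ (4*(d+1):ℝ)/σ := by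
          rw [abs_div, abs_of_pos hw0, div_le_iff₀ hw0, hwdef]
          have : (4*(d+1):ℝ)/σ * (σ/(4*(d+1))) = 1 := by field_simp
          rw [this]
          exact hcoord i k
        rw [abs_le] at hb
        constructor
        · rw [Int.le_floor]
          push_cast
          rw [hMdef]
          push_cast
          calc -(⌈(4*(d+1):ℝ)/σ⌉:ℝ) ≤ -((4*(d+1):ℝ)/σ) := by
                simp only [neg_le_neg_iff]; exact Int.le_ceil _
            _ ≤ u i k / w := hb.1
        · calc ⌊u i k / w⌋ ≤ ⌊(4*(d+1):ℝ)/σ⌋ := Int.floor_le_floor hb.2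
            _ ≤ ⌈(4*(d+1):ℝ)/σ⌉ := Int.floor_le_ceil _
            _ = M := hMdef.symm
      · rw [Finset.mem_Icc]
        constructor
        · rw [Int.le_floor]; push_cast
          exact mul_nonneg (hθ0 i) (div_nonneg (by norm_num) hσ0.le)
        · calc ⌊θ i * (4/σ)⌋ ≤ ⌊(4:ℝ)/σ⌋ := by
                apply Int.floor_le_floor
                calc θ i * (4/σ) ≤ 1 * (4/σ) :=
                      mul_le_mul_of_nonneg_right (hθ1 i) (div_nonneg (by norm_num) hσ0.le)
                  _ = 4/σ := one_mul _
            _ ≤ ⌈(4:ℝ)/σ⌉ := Int.floor_le_ceil _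
            _ = K := hKdef.symm
    -- counting
    have hcard : n ≤ T.card := by
      calc n = (Finset.univ : Finset (Fin n)).card := by simp
        _ ≤ T.card := Finset.card_le_card_of_injOn f (fun i _ => hmem i) hinj.injOn
    have hTc : T.card = (Finset.Icc (-M) M).card ^ d * (Finset.Icc (0:ℤ) K).card := by
      rw [hTdef, Finset.card_product, Fintype.card_piFinset, Finset.prod_const,
        Finset.card_univ, Fintype.card_fin]
    have hIcc1 : ((Finset.Icc (-M) M).card : ℝ) = 2*(M:ℝ)+1 := by
      rw [Int.card_Icc]
      have h1 : (M + 1 - -M) = 2*M+1 := by ring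
      rw [h1]
      have h2 : ((2*M+1).toNat : ℤ) = 2*M+1 := Int.toNat_of_nonneg (by omega)
      exact_mod_cast h2
    have hIcc2 : ((Finset.Icc (0:ℤ) K).card : ℝ) = (K:ℝ)+1 := by
      rw [Int.card_Icc]
      have h1 : (K + 1 - 0) = K+1 := by ring
      rw [h1]
      have h2 : ((K+1).toNat : ℤ) = K+1 := Int.toNat_of_nonneg (by omega)
      exact_mod_cast h2
    have hMb : 2*(M:ℝ)+1 ≤ 11*((d:ℝ)+1)/σ := by
      obtain ⟨X, hX⟩ : ∃ X:ℝ, X = ((d:ℝ)+1)/σ := ⟨_, rfl⟩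
      have e1 : 4*((d:ℝ)+1)/σ = 4*X := by rw [hX]; ring
      have e2 : 11*((d:ℝ)+1)/σ = 11*X := by rw [hX]; ring
      have hd1 : (1:ℝ) ≤ X := by
        rw [hX, le_div_iff₀ hσ0]; nlinarith [Nat.cast_nonneg (α := ℝ) d]
      have h1 : (M:ℝ) < 4*((d:ℝ)+1)/σ + 1 := by
        rw [hMdef]; exact_mod_cast Int.ceil_lt_add_one _
      rw [e2]; rw [e1] at h1; linarith
    have hKb : (K:ℝ)+1 ≤ 6/σ := by
      obtain ⟨Y, hY⟩ : ∃ Y:ℝ, Y = 1/σ := ⟨_, rfl⟩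
      have e1 : (4:ℝ)/σ = 4*Y := by rw [hY]; ring
      have e2 : (6:ℝ)/σ = 6*Y := by rw [hY]; ring
      have hd1 : (1:ℝ) ≤ Y := by rw [hY, le_div_iff₀ hσ0]; nlinarith
      have h1 : (K:ℝ) < 4/σ + 1 := by
        rw [hKdef]; exact_mod_cast Int.ceil_lt_add_one _
      rw [e2]; rw [e1] at h1; linarith
    have hTcard : (T.card : ℝ) ≤ (11*((d:ℝ)+1)/σ)^d * (6/σ) := by
      have hc2 : (T.card : ℝ) = ((Finset.Icc (-M) M).card : ℝ)^d * ((Finset.Icc (0:ℤ) K).card : ℝ) := by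
        rw [hTc]; push_cast; ring
      rw [hc2, hIcc1, hIcc2]
      apply mul_le_mul (pow_le_pow_left₀ (by positivity) hMb d) hKb (by positivity)
        (by positivity)
    have hfinal : ((11:ℝ)*((d:ℝ)+1)/σ)^d * (6/σ) ≤ 6 * (11*((d:ℝ)+1))^d / σ ^ (d + 2) := by
      rw [div_pow, div_mul_div_comm, div_le_div_iff₀ (by positivity) (by positivity)]
      have key : σ^(d+2) ≤ σ^(d+1) := pow_le_pow_of_le_one hσ0.le hσ1.le (by omega)
      calc (11*((d:ℝ)+1))^d * 6 * σ^(d+2) ≤ (11*((d:ℝ)+1))^d * 6 * σ^(d+1) := by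
            apply mul_le_mul_of_nonneg_left key (by positivity)
        _ = 6*(11*((d:ℝ)+1))^d * (σ^d * σ) := by ring
    calc (n:ℝ) ≤ (T.card : ℝ) := by exact_mod_cast hcard
      _ ≤ (11*((d:ℝ)+1)/σ)^d * (6/σ) := hTcard
      _ ≤ 6 * (11*((d:ℝ)+1))^d / σ ^ (d + 2) := hfinal
end

section
/- Let B be a ball of radius r in ℝ^d and L a σ-exposed family of segments (σ ∈ (0,1)), each intersecting B and each of length at least r. Then |L| = O(1/σ^{2d+2}). -/
set_option maxHeartbeats 800000 in
lemma chain_bound {τ r : ℝ} (hτ : 0 < τ) (hτ1 : τ ≤ 1/2) (hr : 0 < r) (m : ℕ)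
    (AA BB : ℕ → ℝ)
    (hpos : ∀ k, k < m → 0 ≤ AA k ∧ 0 ≤ BB k ∧ r ≤ AA k + BB k)
    (hchain : ∀ k l, k < l → l < m →
      AA k + τ * (AA l + BB l) ≤ AA l ∧ BB l + τ * (AA k + BB k) ≤ BB k) :
    (m : ℝ) ≤ 4 + 2 / τ ^ 2 := by
  rcases le_or_gt m 4 with hm | hm
  · have : (m : ℝ) ≤ 4 := by exact_mod_cast hm
    have : 0 < 2 / τ ^ 2 := by positivity
    linarith
  -- m ≥ 5
  have hm5 : 5 ≤ m := hm
  -- positivity facts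
  have hApos : ∀ k, 1 ≤ k → k < m → 0 < AA k := by
    intro k h1 h2
    have h := (hchain 0 k (by omega) h2).1
    have h0 := hpos 0 (by omega)
    have hk := hpos k h2
    nlinarith [h0.1, hk.2.2]
  have hBpos : ∀ k, k < m - 1 → 0 < BB k := by
    intro k h1
    have h := (hchain k (m-1) (by omega) (by omega)).2
    have hk := hpos k (by omega)
    have hl := hpos (m-1) (by omega)
    nlinarith [hl.2.1, hk.2.2]
  -- range facts
  have hx1 : τ * AA (m-2) ≤ BB (m-2) := by
    have h := (hchain (m-2) (m-1) (by omega) (by omega)).2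
    have := (hpos (m-1) (by omega)).2.1
    have := (hpos (m-2) (by omega)).2.1
    nlinarith
  have hx2 : BB (m-2) ≤ BB 1 := by
    have h := (hchain 1 (m-2) (by omega) (by omega)).2
    have := (hpos 1 (by omega)).2.2
    nlinarith
  have hx3 : τ * BB 1 ≤ AA 1 := by
    have h := (hchain 0 1 (by omega) (by omega)).1
    have h0 := (hpos 0 (by omega)).1
    have h1 := (hpos 1 (by omega)).1
    nlinarith
  have hx4 : AA 1 ≤ AA (m-2) := by
    have h := (hchain 1 (m-2) (by omega) (by omega)).1
    have := (hpos (m-2) (by omega)).2.2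
    nlinarith
  have hA1 : 0 < AA 1 := hApos 1 le_rfl (by omega)
  have hBm2 : 0 < BB (m-2) := hBpos (m-2) (by omega)
  -- increment bounds
  have incA : ∀ k, 1 ≤ k → k + 1 ≤ m - 2 →
      τ * (BB (k+1) / AA (k+1)) ≤ Real.log (AA (k+1)) - Real.log (AA k) := by
    intro k h1 h2
    have hk : 0 < AA k := hApos k h1 (by omega)
    have hk1 : 0 < AA (k+1) := hApos (k+1) (by omega) (by omega)
    have hch := (hchain k (k+1) (by omega) (by omega)).1
    have hlog : Real.log (AA k) - Real.log (AA (k+1)) ≤ AA k / AA (k+1) - 1 := by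
      rw [← Real.log_div hk.ne' hk1.ne']
      exact Real.log_le_sub_one_of_pos (by positivity)
    have h3 : AA k + τ * BB (k+1) ≤ AA (k+1) := by nlinarith [(hpos (k+1) (by omega : k+1 < m)).1]
    have hlin : AA k / AA (k+1) - 1 + τ * (BB (k+1) / AA (k+1)) ≤ 0 := by
      have h4 : (AA k + τ * BB (k+1)) / AA (k+1) ≤ 1 := (div_le_one hk1).mpr h3
      have h5 : AA k / AA (k+1) - 1 + τ * (BB (k+1) / AA (k+1))
          = (AA k + τ * BB (k+1)) / AA (k+1) - 1 := by ring
      linarith [h5 ▸ (sub_nonpos.mpr h4)]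
    linarith
  have incB : ∀ k, 1 ≤ k → k + 1 ≤ m - 2 →
      τ * (AA k / BB k) ≤ Real.log (BB k) - Real.log (BB (k+1)) := by
    intro k h1 h2
    have hk : 0 < BB k := hBpos k (by omega)
    have hk1 : 0 < BB (k+1) := hBpos (k+1) (by omega)
    have hch := (hchain k (k+1) (by omega) (by omega)).2
    have hlog : Real.log (BB (k+1)) - Real.log (BB k) ≤ BB (k+1) / BB k - 1 := by
      rw [← Real.log_div hk1.ne' hk.ne']
      exact Real.log_le_sub_one_of_pos (by positivity)
    have h3 : BB (k+1) + τ * AA k ≤ BB k := by nlinarith [(hpos k (by omega : k < m)).2.1]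
    have hlin : BB (k+1) / BB k - 1 + τ * (AA k / BB k) ≤ 0 := by
      have h4 : (BB (k+1) + τ * AA k) / BB k ≤ 1 := (div_le_one hk).mpr h3
      have h5 : BB (k+1) / BB k - 1 + τ * (AA k / BB k)
          = (BB (k+1) + τ * AA k) / BB k - 1 := by ring
      linarith [h5 ▸ (sub_nonpos.mpr h4)]
    linarith
  -- telescoping sums
  have teleA : ∑ k ∈ Finset.Ico 1 (m-2), (Real.log (AA (k+1)) - Real.log (AA k))
      = Real.log (AA (m-2)) - Real.log (AA 1) := by
    rw [Finset.sum_Ico_eq_sub _ (by omega : 1 ≤ m - 2),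
      Finset.sum_range_sub (fun i => Real.log (AA i)),
      Finset.sum_range_sub (fun i => Real.log (AA i))]
    ring
  have teleB : ∑ k ∈ Finset.Ico 1 (m-2), (Real.log (BB k) - Real.log (BB (k+1)))
      = Real.log (BB 1) - Real.log (BB (m-2)) := by
    have : ∀ i, Real.log (BB i) - Real.log (BB (i+1))
        = -(Real.log (BB (i+1)) - Real.log (BB i)) := fun i => by ring
    simp_rw [this]
    rw [Finset.sum_neg_distrib, Finset.sum_Ico_eq_sub _ (by omega : 1 ≤ m - 2),
      Finset.sum_range_sub (fun i => Real.log (BB i)),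
      Finset.sum_range_sub (fun i => Real.log (BB i))]
    ring
  have hloginv : -Real.log τ ≤ 1/τ := by
    have h1 : Real.log τ⁻¹ ≤ τ⁻¹ - 1 := Real.log_le_sub_one_of_pos (by positivity)
    rw [Real.log_inv] at h1
    rw [inv_eq_one_div] at h1
    linarith [one_div_pos.mpr hτ]
  have rangeA : Real.log (AA (m-2)) - Real.log (AA 1) ≤ 2 / τ := by
    have hq : AA (m-2) ≤ AA 1 / τ^2 := by
      rw [le_div_iff₀ (by positivity)]
      nlinarith
    have hAm2 : 0 < AA (m-2) := hApos (m-2) (by omega) (by omega)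
    have hlog2 : Real.log (AA (m-2)) ≤ Real.log (AA 1 / τ^2) :=
      Real.log_le_log hAm2 hq
    rw [Real.log_div hA1.ne' (by positivity), Real.log_pow] at hlog2
    push_cast at hlog2
    have : 2/τ = 2*(1/τ) := by ring
    rw [this]
    nlinarith
  have rangeB : Real.log (BB 1) - Real.log (BB (m-2)) ≤ 2 / τ := by
    have hB1 : 0 < BB 1 := hBpos 1 (by omega)
    have hq : BB 1 ≤ BB (m-2) / τ^2 := by
      rw [le_div_iff₀ (by positivity)]
      nlinarith
    have hlog2 : Real.log (BB 1) ≤ Real.log (BB (m-2) / τ^2) :=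
      Real.log_le_log hB1 hq
    rw [Real.log_div hBm2.ne' (by positivity), Real.log_pow] at hlog2
    push_cast at hlog2
    have : 2/τ = 2*(1/τ) := by ring
    rw [this]
    nlinarith
  -- sum bounds
  have hsum1 : ∑ k ∈ Finset.Ico 1 (m-2), (τ * (BB (k+1) / AA (k+1))) ≤ 2/τ := by
    calc ∑ k ∈ Finset.Ico 1 (m-2), (τ * (BB (k+1) / AA (k+1)))
        ≤ ∑ k ∈ Finset.Ico 1 (m-2), (Real.log (AA (k+1)) - Real.log (AA k)) := by
          refine Finset.sum_le_sum (fun k hk => ?_)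
          rw [Finset.mem_Ico] at hk
          exact incA k hk.1 (by omega)
      _ = Real.log (AA (m-2)) - Real.log (AA 1) := teleA
      _ ≤ 2/τ := rangeA
  have hsum2 : ∑ k ∈ Finset.Ico 1 (m-2), (τ * (AA k / BB k)) ≤ 2/τ := by
    calc ∑ k ∈ Finset.Ico 1 (m-2), (τ * (AA k / BB k))
        ≤ ∑ k ∈ Finset.Ico 1 (m-2), (Real.log (BB k) - Real.log (BB (k+1))) := by
          refine Finset.sum_le_sum (fun k hk => ?_)
          rw [Finset.mem_Ico] at hk
          exact incB k hk.1 (by omega)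
      _ = Real.log (BB 1) - Real.log (BB (m-2)) := teleB
      _ ≤ 2/τ := rangeB
  -- the main count
  set s : Finset ℕ := Finset.Ico 2 (m-2) with hs
  have key : ∀ k ∈ s, 2 * τ ≤ τ * (BB k / AA k) + τ * (AA k / BB k) := by
    intro k hk
    rw [hs, Finset.mem_Ico] at hk
    have hA : 0 < AA k := hApos k (by omega) (by omega)
    have hB : 0 < BB k := hBpos k (by omega)
    have h2 : 2 ≤ BB k / AA k + AA k / BB k := by
      have h3 : BB k / AA k + AA k / BB k - 2 = (AA k - BB k)^2 / (AA k * BB k) := by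
        field_simp
        ring
      have h4 : 0 ≤ (AA k - BB k)^2 / (AA k * BB k) :=
        div_nonneg (sq_nonneg _) (le_of_lt (mul_pos hA hB))
      linarith
    calc 2*τ = τ*2 := by ring
      _ ≤ τ*(BB k / AA k + AA k / BB k) := mul_le_mul_of_nonneg_left h2 hτ.le
      _ = τ * (BB k / AA k) + τ * (AA k / BB k) := by ring
  have card_s : ((s.card : ℝ)) = (m:ℝ) - 4 := by
    have h1 : s.card = m - 4 := by rw [hs, Nat.card_Ico]; omega
    rw [h1, Nat.cast_sub (by omega)]
    norm_num
  have lower : 2*τ*((m:ℝ)-4) ≤ ∑ k ∈ s, (τ * (BB k / AA k) + τ * (AA k / BB k)) := by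
    calc 2*τ*((m:ℝ)-4) = ∑ k ∈ s, (2*τ) := by
          rw [Finset.sum_const, nsmul_eq_mul, card_s]; ring
      _ ≤ _ := Finset.sum_le_sum key
  have part2 : ∑ k ∈ s, (τ * (AA k / BB k)) ≤ 2/τ := by
    refine le_trans (Finset.sum_le_sum_of_subset_of_nonneg
      (Finset.Ico_subset_Ico (by omega) le_rfl) ?_) hsum2
    intro k hk _
    rw [Finset.mem_Ico] at hk
    have hA : 0 ≤ AA k := (hpos k (by omega)).1
    have hB : 0 < BB k := hBpos k (by omega)
    exact mul_nonneg hτ.le (div_nonneg hA hB.le)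
  have part1 : ∑ k ∈ s, (τ * (BB k / AA k)) ≤ 2/τ := by
    have hre : ∑ k ∈ s, (τ * (BB k / AA k))
        = ∑ k ∈ Finset.Ico 1 (m-3), (τ * (BB (k+1) / AA (k+1))) := by
      rw [hs, Finset.sum_Ico_eq_sum_range, Finset.sum_Ico_eq_sum_range]
      rw [show m - 2 - 2 = m - 3 - 1 from by omega]
      refine Finset.sum_congr rfl (fun i _ => ?_)
      rw [show 1 + i + 1 = 2 + i from by omega]
    rw [hre]
    refine le_trans (Finset.sum_le_sum_of_subset_of_nonneg
      (Finset.Ico_subset_Ico le_rfl (by omega)) ?_) hsum1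
    intro k hk _
    rw [Finset.mem_Ico] at hk
    have hA : 0 < AA (k+1) := hApos (k+1) (by omega) (by omega)
    have hB : 0 ≤ BB (k+1) := (hpos (k+1) (by omega)).2.1
    exact mul_nonneg hτ.le (div_nonneg hB hA.le)
  have upper : ∑ k ∈ s, (τ * (BB k / AA k) + τ * (AA k / BB k)) ≤ 4/τ := by
    rw [Finset.sum_add_distrib]
    have h44 : (4:ℝ)/τ = 2/τ + 2/τ := by ring
    linarith
  have final : (m:ℝ) - 4 ≤ 2/τ^2 := by
    have h2τ : (0:ℝ) < 2*τ := by positivity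
    rw [← mul_le_mul_iff_of_pos_left h2τ]
    calc 2*τ*((m:ℝ)-4) ≤ 4/τ := le_trans lower upper
      _ = 2*τ*(2/τ^2) := by field_simp; ring
  linarith

lemma exists_sorted {ι : Type*} [DecidableEq ι] (T : Finset ι) (A : ι → ℝ)
    (hinj : Set.InjOn A T) (hne : T.Nonempty) :
    ∃ idx : ℕ → ι, (∀ k, k < T.card → idx k ∈ T) ∧
      (∀ k l, k < l → l < T.card → A (idx k) < A (idx l)) := by
  classical
  set TA := T.image A with hTA
  have hcard : TA.card = T.card := Finset.card_image_of_injOn hinj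
  let e := TA.orderIsoOfFin hcard
  have hpre : ∀ k : Fin T.card, ∃ i, i ∈ T ∧ A i = (e k : ℝ) := by
    intro k
    have h2 := (e k).2
    simp only [hTA, Finset.mem_image] at h2
    obtain ⟨i, hi, hAi⟩ := h2
    exact ⟨i, hi, hAi⟩
  choose f hfT hfA using hpre
  refine ⟨fun k => if h : k < T.card then f ⟨k, h⟩ else hne.choose, fun k hk => ?_, ?_⟩
  · simp only [dif_pos hk]
    exact hfT _
  · intro k l hkl hl
    have hk : k < T.card := hkl.trans hl
    simp only [dif_pos hk, dif_pos hl, hfA]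
    have : e ⟨k, hk⟩ < e ⟨l, hl⟩ := by
      apply e.strictMono
      exact hkl
    exact_mod_cast this

lemma grid_dist {d : ℕ} {ρ : ℝ} (hρ : 0 < ρ) (x y : EuclideanSpace ℝ (Fin d))
    (h : ∀ k, round (x k / ρ) = round (y k / ρ)) : dist x y ≤ d * ρ := by
  rw [EuclideanSpace.dist_eq]
  have hcoord : ∀ k, dist (x k) (y k) ≤ ρ := by
    intro k
    have h1 := abs_sub_round (x k / ρ)
    have h2 := abs_sub_round (y k / ρ)
    rw [h k] at h1
    have h3 : |x k / ρ - y k / ρ| ≤ 1 := by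
      calc |x k / ρ - y k / ρ|
          ≤ |x k / ρ - (round (y k / ρ) : ℝ)| + |(round (y k / ρ) : ℝ) - y k / ρ| :=
            abs_sub_le _ _ _
        _ ≤ 1 := by
            have h2' : |(round (y k / ρ) : ℝ) - y k / ρ| ≤ 1/2 := by rwa [abs_sub_comm]
            linarith
    have h4 : x k - y k = (x k / ρ - y k / ρ) * ρ := by field_simp
    rw [Real.dist_eq, h4, abs_mul, abs_of_pos hρ]
    nlinarith [abs_nonneg (x k / ρ - y k / ρ)]
  have hsum : ∑ k, dist (x k) (y k) ^ 2 ≤ (d : ℝ) * ρ ^ 2 := by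
    calc ∑ k, dist (x k) (y k) ^ 2 ≤ ∑ _k : Fin d, ρ ^ 2 := by
          refine Finset.sum_le_sum (fun k _ => ?_)
          have := hcoord k
          nlinarith [dist_nonneg (x := x k) (y := y k)]
      _ = (d : ℝ) * ρ ^ 2 := by rw [Finset.sum_const, Finset.card_univ]; simp [nsmul_eq_mul]
  calc Real.sqrt (∑ k, dist (x k) (y k) ^ 2) ≤ Real.sqrt ((d*ρ)^2) := by
        apply Real.sqrt_le_sqrt
        have hd2 : (d:ℝ) ≤ (d:ℝ)^2 := by
          rcases Nat.eq_zero_or_pos d with h0 | h1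
          · simp [h0]
          · have : (1:ℝ) ≤ (d:ℝ) := by exact_mod_cast h1
            nlinarith
        nlinarith [sq_nonneg ρ]
    _ = d * ρ := Real.sqrt_sq (by positivity)

variable {E : Type*} [NormedAddCommGroup E] [NormedSpace ℝ E]

lemma seg_mem_aux (a u : E) {D s : ℝ} (h0 : 0 ≤ s) (hs : s ≤ D) :
    a + s • u ∈ segment ℝ a (a + D • u) := by
  rcases eq_or_lt_of_le (h0.trans hs) with hD | hD
  · have : s = 0 := le_antisymm (hs.trans hD.ge) h0
    simp [this, left_mem_segment]
  · rw [segment_eq_image]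
    refine ⟨s / D, ⟨by positivity, by rw [div_le_one hD]; exact hs⟩, ?_⟩
    show (1 - s/D) • a + (s / D) • (a + D • u) = a + s • u
    rw [smul_add, smul_smul, div_mul_cancel₀ _ hD.ne']
    module

lemma segment_subset_ball (x y : E) : segment ℝ x y ⊆ Metric.closedBall x (dist x y) := by
  intro p hp
  rw [segment_eq_image] at hp
  obtain ⟨t, ⟨ht0, ht1⟩, rfl⟩ := hp
  rw [Metric.mem_closedBall, dist_eq_norm]
  have : (1 - t) • x + t • y - x = t • (y - x) := by module
  rw [this, norm_smul, Real.norm_eq_abs, abs_of_nonneg ht0, dist_eq_norm, norm_sub_rev x y]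
  nlinarith [norm_nonneg (y - x)]

lemma dist_le_diam_segment (x y : E) : dist x y ≤ Metric.diam (segment ℝ x y) :=
  Metric.dist_le_diam_of_mem
    (Metric.isBounded_closedBall.subset (segment_subset_ball x y))
    (left_mem_segment ℝ x y) (right_mem_segment ℝ x y)


lemma shadows_of_exists {σ : ℝ} (hσ : 0 ≤ σ) (a₁ b₁ a₂ b₂ a' b' : E)
    (ha' : a' ∈ segment ℝ a₁ b₁) (hb' : b' ∈ segment ℝ a₁ b₁)
    (hA : dist a₂ a' ≤ σ * dist a₂ b₂) (hB : dist b₂ b' ≤ σ * dist a₂ b₂) :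
    Shadows σ (segment ℝ a₁ b₁) (segment ℝ a₂ b₂) := by
  intro p hp
  rw [segment_eq_image] at hp
  obtain ⟨t, ⟨ht0, ht1⟩, rfl⟩ := hp
  have hp' : (1-t) • a' + t • b' ∈ segment ℝ a₁ b₁ :=
    (convex_segment a₁ b₁) ha' hb' (by linarith) ht0 (by ring)
  refine le_trans (Metric.infDist_le_dist_of_mem hp') (le_trans ?_
    (mul_le_mul_of_nonneg_left (dist_le_diam_segment a₂ b₂) hσ))
  rw [dist_eq_norm]
  have heq : (1 - t) • a₂ + t • b₂ - ((1 - t) • a' + t • b') =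
      (1 - t) • (a₂ - a') + t • (b₂ - b') := by module
  rw [heq]
  refine le_trans (norm_add_le _ _) ?_
  rw [norm_smul, norm_smul, Real.norm_eq_abs, Real.norm_eq_abs,
    abs_of_nonneg (by linarith : (0:ℝ) ≤ 1 - t), abs_of_nonneg ht0]
  rw [dist_eq_norm] at hA hB
  nlinarith [norm_nonneg (a₂ - a'), norm_nonneg (b₂ - b')]

section helpers

variable {E : Type*} [NormedAddCommGroup E] [NormedSpace ℝ E]

-- coordinate bound
lemma coord_le_norm {d : ℕ} (v : EuclideanSpace ℝ (Fin d)) (k : Fin d) : |v k| ≤ ‖v‖ := by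
  rw [EuclideanSpace.norm_eq]
  rw [show |v k| = Real.sqrt ((v k)^2) by rw [Real.sqrt_sq_eq_abs]]
  apply Real.sqrt_le_sqrt
  simpa using Finset.single_le_sum (f := fun j => (v j)^2) (fun j _ => sq_nonneg _)
    (Finset.mem_univ k)

-- rounding comparison
lemma round_mem_Icc {x y M : ℝ} (hM : |x - y| + 1 ≤ M) (z : ℤ) (hz : (z:ℝ) = M) :
    round x ∈ Finset.Icc (round y - z) (round y + z) := by
  have h1 := abs_sub_round x
  have h2 := abs_sub_round y
  have h3 : |(round x : ℝ) - (round y : ℝ)| ≤ M := by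
    calc |(round x : ℝ) - (round y : ℝ)|
        ≤ |(round x : ℝ) - x| + |x - y| + |y - (round y : ℝ)| := by
          have := abs_sub_le ((round x : ℝ)) x ((round y:ℝ))
          have := abs_sub_le x y ((round y:ℝ))
          linarith [abs_sub_le ((round x : ℝ)) x ((round y:ℝ)), abs_sub_le x y ((round y:ℝ))]
      _ ≤ M := by
          rw [abs_sub_comm ((round x:ℝ)) x] at *
          linarith [abs_sub_round x, abs_sub_round y,
            (abs_sub_comm y ((round y:ℝ))) ▸ (abs_sub_round y)]
  rw [Finset.mem_Icc]
  rw [abs_le] at h3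
  constructor
  · have h4 : ((round y - z : ℤ) : ℝ) ≤ ((round x : ℤ) : ℝ) := by push_cast; linarith
    exact_mod_cast h4
  · have h4 : ((round x : ℤ) : ℝ) ≤ ((round y + z : ℤ) : ℝ) := by push_cast; linarith
    exact_mod_cast h4

end helpers

set_option maxHeartbeats 1600000 in
/-- A `σ`-exposed family of segments in `ℝ^d`, all intersecting a ball of radius `r` and all
of length at least `r`, has `O(1/σ^(2d+2))` members. -/
theorem stmt11 (d : ℕ) :
    ∃ C : ℝ, 0 < C ∧
      ∀ (σ : ℝ), 0 < σ → σ < 1 →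
      ∀ (c : EuclideanSpace ℝ (Fin d)) (r : ℝ), 0 < r →
      ∀ (n : ℕ) (a b : Fin n → EuclideanSpace ℝ (Fin d)),
        (∀ i, (segment ℝ (a i) (b i) ∩ Metric.closedBall c r).Nonempty) →
        (∀ i, r ≤ dist (a i) (b i)) →
        (∀ i j, i ≠ j → ¬ Shadows σ (segment ℝ (a i) (b i)) (segment ℝ (a j) (b j))) →
        (n : ℝ) ≤ C / σ ^ (2 * d + 2) := by
  classical
  refine ⟨12 * (21*(d:ℝ) + 21)^(2*d), by positivity, ?_⟩
  intro σ hσ hσ1 c r hr n a b hint hlen hexp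
  have hCpos : (0:ℝ) < 12 * (21*(d:ℝ) + 21)^(2*d) := by positivity
  have hσpow : (0:ℝ) < σ ^ (2*d+2) := by positivity
  rcases Nat.eq_zero_or_pos d with hd0 | hd
  · subst hd0
    have hn0 : n = 0 := by
      by_contra hn
      have i : Fin n := ⟨0, Nat.pos_of_ne_zero hn⟩
      have h1 := hlen i
      have hab : a i = b i := by
        ext k
        exact absurd k.2 (by omega)
      rw [hab, dist_self] at h1
      linarith
    rw [hn0]
    push_cast
    positivity
  -- main case : d ≥ 1
  have hd1 : (1:ℝ) ≤ (d:ℝ) := by exact_mod_cast hd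
  -- extract data
  choose q hqseg hqball using hint
  have hD : ∀ i, 0 < dist (a i) (b i) := fun i => lt_of_lt_of_le hr (hlen i)
  set D : Fin n → ℝ := fun i => dist (a i) (b i) with hDdef
  set u : Fin n → EuclideanSpace ℝ (Fin d) := fun i => (D i)⁻¹ • (b i - a i) with hudef
  have hseg' : ∀ i, ∃ t : ℝ, 0 ≤ t ∧ t ≤ 1 ∧ q i = (1 - t) • a i + t • b i := by
    intro i
    have h := hqseg i
    rw [segment_eq_image] at h
    obtain ⟨t, ht, hft⟩ := h
    exact ⟨t, ht.1, ht.2, hft.symm⟩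
  choose t ht0 ht1 hq using hseg'
  set A : Fin n → ℝ := fun i => t i * D i with hAdef
  set B : Fin n → ℝ := fun i => (1 - t i) * D i with hBdef
  have hA0 : ∀ i, 0 ≤ A i := fun i => mul_nonneg (ht0 i) (hD i).le
  have hB0 : ∀ i, 0 ≤ B i := fun i => mul_nonneg (by linarith [ht1 i]) (hD i).le
  have hAB : ∀ i, A i + B i = D i := fun i => by rw [hAdef, hBdef]; ring
  have hscale : ∀ i (s : ℝ), (s * D i) • u i = s • (b i - a i) := by
    intro i s
    rw [hudef]
    rw [smul_smul, mul_assoc, mul_inv_cancel₀ (hD i).ne', mul_one]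
  have hnormu : ∀ i, ‖u i‖ = 1 := by
    intro i
    rw [hudef]
    simp only [norm_smul, norm_inv, Real.norm_eq_abs, abs_of_pos (hD i)]
    rw [← dist_eq_norm, dist_comm (b i) (a i)]
    show |dist (a i) (b i)|⁻¹ * dist (a i) (b i) = 1; rw [abs_of_pos (hD i)]; exact inv_mul_cancel₀ (hD i).ne'
  have hqa : ∀ i, q i = a i + A i • u i := by
    intro i
    rw [hAdef]
    simp only
    rw [hscale i (t i), hq i]
    module
  have hbrep : ∀ i, b i = a i + D i • u i := by
    intro i
    have h := hscale i 1
    rw [one_mul, one_smul] at h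
    rw [h]
    module
  -- the shadow criterion in terms of A, B
  have key1 : ∀ i j, dist (q i) (q j) ≤ σ*r/8 → ‖u i - u j‖ ≤ σ/8 →
      A j ≤ A i + σ/2 * D j → B j ≤ B i + σ/2 * D j →
      Shadows σ (segment ℝ (a i) (b i)) (segment ℝ (a j) (b j)) := by
    intro i j hq' hu' hA' hB'
    have hrD : r ≤ D j := hlen j
    have hAD : A j ≤ D j := by have := hAB j; have := hB0 j; linarith
    have hBD : B j ≤ D j := by have := hAB j; have := hA0 j; linarith
    have ha' : q i - (min (A j) (A i)) • u i ∈ segment ℝ (a i) (b i) := by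
      have h1 : q i - (min (A j) (A i)) • u i = a i + (A i - min (A j) (A i)) • u i := by
        rw [hqa i]; module
      rw [h1, hbrep i]
      refine seg_mem_aux _ _ ?_ ?_
      · simp [min_le_right]
      · have h2 : min (A j) (A i) ≥ 0 := le_min (hA0 j) (hA0 i)
        have := hAB i; have := hB0 i
        linarith [min_le_right (A j) (A i)]
    have hb' : q i + (min (B j) (B i)) • u i ∈ segment ℝ (a i) (b i) := by
      have h1 : q i + (min (B j) (B i)) • u i = a i + (A i + min (B j) (B i)) • u i := by
        rw [hqa i]; module
      rw [h1, hbrep i]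
      refine seg_mem_aux _ _ ?_ ?_
      · have := le_min (hB0 j) (hB0 i); have := hA0 i; linarith
      · have := hAB i
        linarith [min_le_right (B j) (B i)]
    have hdista : dist (a j) (q i - (min (A j) (A i)) • u i) ≤ σ * D j := by
      have hrepaj : a j = q j - A j • u j := by rw [hqa j]; module
      rw [dist_eq_norm, hrepaj]
      have hsplit : (q j - A j • u j) - (q i - (min (A j) (A i)) • u i)
          = (q j - q i) + A j • (u i - u j) + (min (A j) (A i) - A j) • u i := by
        module
      rw [hsplit]
      have hb1 : ‖q j - q i‖ ≤ σ*r/8 := by rw [← dist_eq_norm, dist_comm]; exact hq'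
      have hb2 : ‖A j • (u i - u j)‖ ≤ A j * (σ/8) := by
        rw [norm_smul, Real.norm_eq_abs, abs_of_nonneg (hA0 j)]
        exact mul_le_mul_of_nonneg_left hu' (hA0 j)
      have hb3 : ‖(min (A j) (A i) - A j) • u i‖ ≤ σ/2 * D j := by
        rw [norm_smul, hnormu i, mul_one, Real.norm_eq_abs,
          abs_of_nonpos (by simp [min_le_left] : min (A j) (A i) - A j ≤ 0)]
        rcases le_total (A j) (A i) with h | h
        · rw [min_eq_left h]; simp; positivity
        · rw [min_eq_right h]; linarith
      calc ‖(q j - q i) + A j • (u i - u j) + (min (A j) (A i) - A j) • u i‖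
          ≤ ‖q j - q i‖ + ‖A j • (u i - u j)‖ + ‖(min (A j) (A i) - A j) • u i‖ :=
            norm_add₃_le
        _ ≤ σ*r/8 + A j * (σ/8) + σ/2 * D j := by linarith
        _ ≤ σ * D j := by nlinarith
    have hdistb : dist (b j) (q i + (min (B j) (B i)) • u i) ≤ σ * D j := by
      have hrepbj : b j = q j + B j • u j := by
        rw [hqa j, hbrep j]
        have h := hAB j
        have : (B j) • u j = (D j) • u j - (A j) • u j := by
          rw [← sub_smul]
          congr 1
          linarith
        rw [this]
        module
      rw [dist_eq_norm, hrepbj]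
      have hsplit : (q j + B j • u j) - (q i + (min (B j) (B i)) • u i)
          = (q j - q i) + B j • (u j - u i) + (B j - min (B j) (B i)) • u i := by
        module
      rw [hsplit]
      have hb1 : ‖q j - q i‖ ≤ σ*r/8 := by rw [← dist_eq_norm, dist_comm]; exact hq'
      have hb2 : ‖B j • (u j - u i)‖ ≤ B j * (σ/8) := by
        rw [norm_smul, Real.norm_eq_abs, abs_of_nonneg (hB0 j), norm_sub_rev]
        exact mul_le_mul_of_nonneg_left hu' (hB0 j)
      have hb3 : ‖(B j - min (B j) (B i)) • u i‖ ≤ σ/2 * D j := by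
        rw [norm_smul, hnormu i, mul_one, Real.norm_eq_abs,
          abs_of_nonneg (by simp [min_le_left] : 0 ≤ B j - min (B j) (B i))]
        rcases le_total (B j) (B i) with h | h
        · rw [min_eq_left h]; simp; positivity
        · rw [min_eq_right h]; linarith
      calc ‖(q j - q i) + B j • (u j - u i) + (B j - min (B j) (B i)) • u i‖
          ≤ ‖q j - q i‖ + ‖B j • (u j - u i)‖ + ‖(B j - min (B j) (B i)) • u i‖ :=
            norm_add₃_le
        _ ≤ σ*r/8 + B j * (σ/8) + σ/2 * D j := by linarith
        _ ≤ σ * D j := by nlinarith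
    exact shadows_of_exists hσ.le _ _ _ _ _ _ ha' hb' hdista hdistb
  -- class map
  have h8d : (0:ℝ) < 8*(d:ℝ) := by linarith
  set ρ1 : ℝ := σ*r/(8*(d:ℝ)) with hρ1
  set ρ2 : ℝ := σ/(8*(d:ℝ)) with hρ2
  have hρ1p : 0 < ρ1 := div_pos (by positivity) h8d
  have hρ2p : 0 < ρ2 := div_pos hσ h8d
  set Φ : Fin n → ((Fin d → ℤ) × (Fin d → ℤ)) := fun i =>
    (fun k => round (q i k / ρ1), fun k => round (u i k / ρ2)) with hΦ
  have hclass : ∀ i j, Φ i = Φ j → dist (q i) (q j) ≤ σ*r/8 ∧ ‖u i - u j‖ ≤ σ/8 := by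
    intro i j hij
    have h1 : ∀ k, round (q i k / ρ1) = round (q j k / ρ1) := fun k =>
      congrFun (congrArg Prod.fst hij) k
    have h2 : ∀ k, round (u i k / ρ2) = round (u j k / ρ2) := fun k =>
      congrFun (congrArg Prod.snd hij) k
    have hd0 : (d:ℝ) ≠ 0 := by linarith
    constructor
    · calc dist (q i) (q j) ≤ d * ρ1 := grid_dist hρ1p _ _ h1
        _ = σ*r/8 := by rw [hρ1]; field_simp
    · calc ‖u i - u j‖ = dist (u i) (u j) := (dist_eq_norm _ _).symm
        _ ≤ d * ρ2 := grid_dist hρ2p _ _ h2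
        _ = σ/8 := by rw [hρ2]; field_simp
  have hpair : ∀ i j, i ≠ j → Φ i = Φ j →
      ¬(A j ≤ A i + σ/2 * D j ∧ B j ≤ B i + σ/2 * D j) := by
    rintro i j hne hij ⟨h1, h2⟩
    obtain ⟨hc1, hc2⟩ := hclass i j hij
    exact hexp i j hne (key1 i j hc1 hc2 h1 h2)
  have hAinj : ∀ i j, i ≠ j → Φ i = Φ j → A i ≠ A j := by
    intro i j hne hij heq
    have p1 := hpair i j hne hij
    have p2 := hpair j i hne.symm hij.symm
    push_neg at p1 p2
    have hDj : 0 < D j := hD j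
    have hDi : 0 < D i := hD i
    have hb1 : B i + σ/2 * D j < B j := p1 (by nlinarith)
    have hb2 : B j + σ/2 * D i < B i := p2 (by nlinarith)
    nlinarith
  -- fiber bound
  have hfiber : ∀ v, ((Finset.univ.filter (fun i => Φ i = v)).card : ℝ) ≤ 4 + 8/σ^2 := by
    intro v
    set T := Finset.univ.filter (fun i => Φ i = v) with hT
    rcases T.eq_empty_or_nonempty with hTe | hTne
    · rw [hTe]; simp; positivity
    have hΦT : ∀ i, i ∈ T → Φ i = v := fun i hi => (Finset.mem_filter.mp hi).2
    have hinj : Set.InjOn A ↑T := by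
      intro i hi j hj heq
      by_contra hne
      exact hAinj i j hne
        ((hΦT i (Finset.mem_coe.mp hi)).trans (hΦT j (Finset.mem_coe.mp hj)).symm) heq
    obtain ⟨idx, hidxT, hidxA⟩ := exists_sorted T A hinj hTne
    have hm := chain_bound (τ := σ/2) (r := r) (by positivity) (by linarith) hr T.card
      (fun k => A (idx k)) (fun k => B (idx k))
      (fun k hk => ⟨hA0 _, hB0 _, by rw [hAB]; exact hlen _⟩)
      ?chain
    · have heq48 : 4 + 2/((σ/2)^2) = 4 + 8/σ^2 := by
        field_simp
        ring
      linarith [heq48 ▸ hm]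
    case chain =>
      intro k l hkl hl
      have hik : idx k ∈ T := hidxT k (hkl.trans hl)
      have hil : idx l ∈ T := hidxT l hl
      have hAlt : A (idx k) < A (idx l) := hidxA k l hkl hl
      have hne : idx k ≠ idx l := fun h => absurd (congrArg A h) hAlt.ne
      have hΦeq : Φ (idx k) = Φ (idx l) := (hΦT _ hik).trans (hΦT _ hil).symm
      have p2 := hpair (idx l) (idx k) hne.symm hΦeq.symm
      push_neg at p2
      have hDk : 0 < D (idx k) := hD _
      have hDl : 0 < D (idx l) := hD _
      have hBgt : B (idx l) + σ/2 * D (idx k) < B (idx k) := p2 (by nlinarith)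
      have p1 := hpair (idx k) (idx l) hne hΦeq
      push_neg at p1
      have hAgt : A (idx k) + σ/2 * D (idx l) < A (idx l) := by
        by_contra hcon
        push_neg at hcon
        have := p1 (by linarith)
        nlinarith
      refine ⟨?_, ?_⟩
      · have := hAB (idx l); nlinarith
      · have := hAB (idx k); nlinarith
  -- counting via fibers
  have hcount : (n:ℝ) ≤ ((Finset.univ.image Φ).card : ℝ) * (4 + 8/σ^2) := by
    have h1 : (Finset.univ : Finset (Fin n)).card
        = ∑ v ∈ Finset.univ.image Φ, (Finset.univ.filter (fun i => Φ i = v)).card :=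
      Finset.card_eq_sum_card_fiberwise (fun x _ => Finset.mem_image_of_mem _ (Finset.mem_univ x))
    calc (n:ℝ) = ((Finset.univ : Finset (Fin n)).card : ℝ) := by
          rw [Finset.card_univ, Fintype.card_fin]
      _ = ∑ v ∈ Finset.univ.image Φ, ((Finset.univ.filter (fun i => Φ i = v)).card : ℝ) := by
          rw [h1]; push_cast; rfl
      _ ≤ ∑ _v ∈ Finset.univ.image Φ, (4 + 8/σ^2) := Finset.sum_le_sum (fun v _ => hfiber v)
      _ = ((Finset.univ.image Φ).card : ℝ) * (4 + 8/σ^2) := by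
          rw [Finset.sum_const, nsmul_eq_mul]
  -- box bound on the image
  set M : ℤ := ⌈(8*(d:ℝ))/σ⌉ + 1 with hMdef
  have hMlow : (8*(d:ℝ))/σ + 1 ≤ (M:ℝ) := by
    rw [hMdef]
    push_cast
    linarith [Int.le_ceil ((8*(d:ℝ))/σ)]
  have hMhigh : (M:ℝ) ≤ (8*(d:ℝ))/σ + 2 := by
    rw [hMdef]
    push_cast
    linarith [Int.ceil_lt_add_one ((8*(d:ℝ))/σ)]
  have hMpos : (0:ℝ) < M := lt_of_lt_of_le (by positivity) hMlow
  have himg : Finset.univ.image Φ ⊆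
      (Fintype.piFinset fun k : Fin d => Finset.Icc (round (c k/ρ1) - M) (round (c k/ρ1) + M)) ×ˢ
      (Fintype.piFinset fun k : Fin d => Finset.Icc (round ((0:ℝ)/ρ2) - M) (round ((0:ℝ)/ρ2) + M)) := by
    intro v hv
    rw [Finset.mem_image] at hv
    obtain ⟨i, _, rfl⟩ := hv
    rw [Finset.mem_product]
    constructor
    · rw [Fintype.mem_piFinset]
      intro k
      refine round_mem_Icc ?_ M rfl
      have hco : |q i k - c k| ≤ r := by
        have h1 : |(q i - c) k| ≤ ‖q i - c‖ := coord_le_norm _ k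
        have h2 : ‖q i - c‖ = dist (q i) c := (dist_eq_norm _ _).symm
        have h3 : (q i - c) k = q i k - c k := rfl
        rw [h3, h2] at h1
        exact h1.trans (Metric.mem_closedBall.mp (hqball i))
      have hdiv : |q i k/ρ1 - c k/ρ1| ≤ (8*(d:ℝ))/σ := by
        calc |q i k/ρ1 - c k/ρ1| = |q i k - c k|/ρ1 := by
              rw [div_sub_div_same, abs_div, abs_of_pos hρ1p]
          _ ≤ r/ρ1 := by gcongr
          _ = (8*(d:ℝ))/σ := by rw [hρ1]; field_simp
      linarith
    · rw [Fintype.mem_piFinset]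
      intro k
      refine round_mem_Icc ?_ M rfl
      have hco : |u i k| ≤ 1 := by
        have h1 := coord_le_norm (u i) k
        rw [hnormu i] at h1
        exact h1
      have hdiv : |u i k/ρ2 - 0/ρ2| ≤ (8*(d:ℝ))/σ := by
        calc |u i k/ρ2 - 0/ρ2| = |u i k|/ρ2 := by
              rw [div_sub_div_same, sub_zero, abs_div, abs_of_pos hρ2p]
          _ ≤ 1/ρ2 := by gcongr
          _ = (8*(d:ℝ))/σ := by rw [hρ2]; field_simp
      linarith
  have hbox1 : ∀ z : Fin d → ℤ,
      (Fintype.piFinset fun k : Fin d => Finset.Icc (z k - M) (z k + M)).card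
        = (2*M+1).toNat ^ d := by
    intro z
    rw [Fintype.card_piFinset]
    have : ∀ k : Fin d, (Finset.Icc (z k - M) (z k + M)).card = (2*M+1).toNat := by
      intro k
      rw [Int.card_Icc]
      congr 1
      ring
    rw [Finset.prod_congr rfl (fun k _ => this k)]
    rw [Finset.prod_const, Finset.card_univ, Fintype.card_fin]
  have h2M : ((2*M+1).toNat : ℝ) ≤ 21*(d:ℝ)/σ := by
    have hnn : (0:ℤ) ≤ 2*M+1 := by
      have : (0:ℝ) < 2*(M:ℝ)+1 := by linarith
      exact_mod_cast le_of_lt (by exact_mod_cast this : (0:ℤ) < 2*M+1)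
    have hc : ((2*M+1).toNat : ℝ) = 2*(M:ℝ)+1 := by
      rw [show ((2*M+1).toNat : ℝ) = (((2*M+1).toNat : ℤ) : ℝ) from by push_cast; ring,
        Int.toNat_of_nonneg hnn]
      push_cast; ring
    rw [hc, le_div_iff₀ hσ]
    have hm1 : (M:ℝ)*σ ≤ (8*(d:ℝ)/σ + 2)*σ := mul_le_mul_of_nonneg_right hMhigh hσ.le
    have h8 : 8*(d:ℝ)/σ*σ = 8*(d:ℝ) := div_mul_cancel₀ _ hσ.ne'
    nlinarith
  have himgcard : ((Finset.univ.image Φ).card : ℝ) ≤ (21*(d:ℝ)/σ)^d * (21*(d:ℝ)/σ)^d := by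
    have h1 := Finset.card_le_card himg
    rw [Finset.card_product, hbox1, hbox1] at h1
    have h2 : ((Finset.univ.image Φ).card : ℝ) ≤ (((2*M+1).toNat : ℝ))^d * (((2*M+1).toNat : ℝ))^d := by
      exact_mod_cast h1
    refine h2.trans ?_
    have hnn : (0:ℝ) ≤ ((2*M+1).toNat : ℝ) := Nat.cast_nonneg _
    exact mul_le_mul (pow_le_pow_left₀ hnn h2M d) (pow_le_pow_left₀ hnn h2M d)
      (by positivity) (by positivity)
  -- final arithmetic
  have h48 : 4 + 8/σ^2 ≤ 12/σ^2 := by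
    have h4 : (4:ℝ) ≤ 4/σ^2 := by
      rw [le_div_iff₀ (by positivity)]
      nlinarith
    have : (12:ℝ)/σ^2 = 4/σ^2 + 8/σ^2 := by ring
    linarith
  have hfin : (n:ℝ) ≤ (21*(d:ℝ)/σ)^d * (21*(d:ℝ)/σ)^d * (12/σ^2) := by
    have hposf : (0:ℝ) ≤ 4 + 8/σ^2 := by positivity
    calc (n:ℝ) ≤ ((Finset.univ.image Φ).card : ℝ) * (4 + 8/σ^2) := hcount
      _ ≤ ((21*(d:ℝ)/σ)^d * (21*(d:ℝ)/σ)^d) * (12/σ^2) := by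
          refine mul_le_mul himgcard h48 hposf ?_
          positivity
  have hee : σ^(2*d+2) = σ^d*σ^d*σ^2 := by
    rw [pow_add, two_mul, pow_add]
  have hL : (21*(d:ℝ)/σ)^d * (21*(d:ℝ)/σ)^d * (12/σ^2)
      = (12 * ((21*(d:ℝ))^d*(21*(d:ℝ))^d)) / σ^(2*d+2) := by
    rw [hee, div_pow]
    field_simp
  rw [hL] at hfin
  refine hfin.trans ?_
  have hnum : 12 * ((21*(d:ℝ))^d*(21*(d:ℝ))^d) ≤ 12 * (21*(d:ℝ) + 21)^(2*d) := by
    have h1 : (21*(d:ℝ))^d*(21*(d:ℝ))^d = (21*(d:ℝ))^(2*d) := by rw [← pow_add, two_mul]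
    rw [h1]
    have h2 : (21*(d:ℝ))^(2*d) ≤ (21*(d:ℝ)+21)^(2*d) :=
      pow_le_pow_left₀ (by positivity) (by linarith) _
    linarith
  gcongr
end

section
/- If L is a (σ, k)-exposed family of segments in ℝ^d, then L has density O(k·σ^{−2d−2}). -/
open Finset Metric

lemma coord_abs_le_norm {d : ℕ} (v : EuclideanSpace ℝ (Fin d)) (m : Fin d) : |v m| ≤ ‖v‖ := by
  rw [EuclideanSpace.norm_eq]
  calc |v m| = Real.sqrt ((v m) ^ 2) := (Real.sqrt_sq_eq_abs _).symm
    _ ≤ Real.sqrt (∑ i, ‖v i‖ ^ 2) := by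
        apply Real.sqrt_le_sqrt
        have := Finset.single_le_sum (f := fun i => ‖v i‖ ^ 2)
          (fun i _ => by positivity) (Finset.mem_univ m)
        simpa [Real.norm_eq_abs, sq_abs] using this

lemma norm_le_of_coords {d : ℕ} (v : EuclideanSpace ℝ (Fin d)) (ε : ℝ) (hε : 0 ≤ ε)
    (h : ∀ m, |v m| ≤ ε) : ‖v‖ ≤ d * ε := by
  rw [EuclideanSpace.norm_eq]
  have h1 : ∑ i, ‖v i‖ ^ 2 ≤ (d : ℝ) * ε ^ 2 := by
    calc ∑ i, ‖v i‖ ^ 2 ≤ ∑ _i : Fin d, ε ^ 2 := by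
          apply Finset.sum_le_sum
          intro i _
          have := h i
          rw [Real.norm_eq_abs]
          nlinarith [abs_nonneg (v i)]
      _ = (d : ℝ) * ε ^ 2 := by simp [Finset.sum_const, Fintype.card_fin, nsmul_eq_mul]
  have hd : (d : ℝ) * ε ^ 2 ≤ ((d : ℝ) * ε) ^ 2 := by
    have : (d : ℝ) ≤ (d : ℝ) ^ 2 := by
      have := Nat.le_self_pow (two_ne_zero) d
      exact_mod_cast this
    nlinarith [sq_nonneg ε]
  calc Real.sqrt (∑ i, ‖v i‖ ^ 2) ≤ Real.sqrt (((d : ℝ) * ε) ^ 2) :=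
        Real.sqrt_le_sqrt (by linarith)
    _ = (d : ℝ) * ε := Real.sqrt_sq (by positivity)

lemma abs_lt_of_floor_div_eq {ε p q : ℝ} (hε : 0 < ε) (h : ⌊p / ε⌋ = ⌊q / ε⌋) :
    |p - q| < ε := by
  have h1 := Int.floor_le (p / ε)
  have h2 := Int.lt_floor_add_one (p / ε)
  have h3 := Int.floor_le (q / ε)
  have h4 := Int.lt_floor_add_one (q / ε)
  rw [h] at h1 h2
  have hp : p = p / ε * ε := (div_mul_cancel₀ _ hε.ne').symm
  have hq : q = q / ε * ε := (div_mul_cancel₀ _ hε.ne').symm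
  rw [abs_lt]
  constructor <;> nlinarith

lemma floor_mem_Icc_of_abs_le {v L ε : ℝ} (hε : 0 < ε) (hv : |v| ≤ L) :
    -(⌊L / ε⌋ + 1) ≤ ⌊v / ε⌋ ∧ ⌊v / ε⌋ ≤ ⌊L / ε⌋ := by
  have h := abs_le.mp hv
  constructor
  · have h1 : -(L / ε) ≤ v / ε := by
      have h2 : -L / ε ≤ v / ε := (div_le_div_iff_of_pos_right hε).mpr h.1
      rw [neg_div] at h2
      exact h2
    calc -(⌊L / ε⌋ + 1) ≤ ⌊-(L / ε)⌋ := by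
          rw [Int.floor_neg]
          have := Int.ceil_le_floor_add_one (L / ε)
          omega
      _ ≤ ⌊v / ε⌋ := Int.floor_le_floor h1
  · exact Int.floor_le_floor ((div_le_div_iff_of_pos_right hε).mpr h.2)

lemma card_Icc_real {K : ℤ} (hK : 0 ≤ K) :
    (((Finset.Icc (-(K + 1)) K).card : ℝ)) = 2 * (K : ℝ) + 2 := by
  rw [Int.card_Icc]
  have h : (K + 1 - -(K + 1)).toNat = 2 * K.toNat + 2 := by omega
  rw [h]
  have h2 : ((K.toNat : ℕ) : ℝ) = (K : ℝ) := by exact_mod_cast Int.toNat_of_nonneg hK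
  push_cast
  rw [h2]
  try ring

lemma isBounded_segment' {E : Type*} [NormedAddCommGroup E] [NormedSpace ℝ E] (a b : E) :
    Bornology.IsBounded (segment ℝ a b) := by
  apply (Metric.isBounded_closedBall (x := a) (r := dist a b)).subset
  intro p hp
  rw [segment_eq_image'] at hp
  obtain ⟨θ, hθ, rfl⟩ := hp
  simp only [Metric.mem_closedBall, dist_comm a, dist_eq_norm]
  rw [show a + θ • (b - a) - a = θ • (b - a) by abel, norm_smul, Real.norm_eq_abs,
    norm_sub_rev]
  have h1 : |θ| ≤ 1 := by rw [abs_le]; exact ⟨by linarith [hθ.1], hθ.2⟩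
  exact mul_le_of_le_one_left (norm_nonneg _) h1

lemma clamp_key_s13 {σ t₁ t₂ θ D₁ D₂ : ℝ} (hσ : 0 < σ) (hD₁ : 0 < D₁) (hD12 : D₁ ≤ D₂)
    (ht₂0 : 0 ≤ t₂) (ht₂1 : t₂ ≤ 1)
    (hθ0 : 0 ≤ θ) (hθ1 : θ ≤ 1) (ht : |t₁ - t₂| ≤ σ / 4) :
    |(θ - t₁) * D₁ - (min 1 (max 0 (t₂ + (θ - t₁) * D₁ / D₂)) - t₂) * D₂| ≤ σ / 4 * D₁ := by
  have hD₂ : 0 < D₂ := lt_of_lt_of_le hD₁ hD12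
  have ht'1 : t₁ - σ / 4 ≤ t₂ := by have := (abs_le.mp ht).2; linarith
  have ht'2 : t₂ ≤ t₁ + σ / 4 := by have := (abs_le.mp ht).1; linarith
  set A := (θ - t₁) * D₁ with hA
  rcases le_or_gt (t₂ + A / D₂) 0 with hw | hw
  · rw [max_eq_left hw, min_eq_right zero_le_one]
    have hAle : A ≤ -t₂ * D₂ := by
      have h1 : A / D₂ ≤ -t₂ := by linarith
      have := (div_le_iff₀ hD₂).mp h1
      linarith [this]
    have hle : (0 - t₂) * D₂ - A ≤ σ / 4 * D₁ := by
      rcases le_or_gt t₁ (σ / 4) with hc | hc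
      · nlinarith [mul_nonneg ht₂0 hD₂.le]
      · have h1 : 0 ≤ t₁ - σ / 4 := by linarith
        have h2 : (t₁ - σ / 4) * D₁ ≤ t₂ * D₂ := by nlinarith
        nlinarith
    rw [abs_of_nonpos (by nlinarith)]
    linarith
  · rcases le_or_gt (t₂ + A / D₂) 1 with hw1 | hw1
    · rw [max_eq_right hw.le, min_eq_right hw1]
      have : (t₂ + A / D₂ - t₂) * D₂ = A := by
        field_simp
        ring
      rw [this, sub_self, abs_zero]
      positivity
    · rw [max_eq_right hw.le, min_eq_left hw1.le]
      have hAge : (1 - t₂) * D₂ ≤ A := by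
        have h1 : 1 - t₂ ≤ A / D₂ := by linarith
        have := (le_div_iff₀ hD₂).mp h1
        linarith [this]
      have hle : A - (1 - t₂) * D₂ ≤ σ / 4 * D₁ := by
        rcases le_or_gt (1 - t₁) (σ / 4) with hc | hc
        · nlinarith [mul_nonneg (by linarith : (0:ℝ) ≤ 1 - t₂) hD₂.le]
        · have h1 : 0 ≤ 1 - t₁ - σ / 4 := by linarith
          have h2 : (1 - t₁ - σ / 4) * D₁ ≤ (1 - t₂) * D₂ := by nlinarith
          nlinarith
      rw [abs_of_nonneg (by nlinarith)]
      linarith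

lemma shadow_aux {E : Type*} [NormedAddCommGroup E] [NormedSpace ℝ E]
    {σ r t₁ t₂ θ : ℝ} {a₁ b₁ a₂ b₂ : E}
    (hσ : 0 < σ) (hr : 0 < r)
    (ht₂0 : 0 ≤ t₂) (ht₂1 : t₂ ≤ 1)
    (hθ0 : 0 ≤ θ) (hθ1 : θ ≤ 1) (ht₁0 : 0 ≤ t₁) (ht₁1 : t₁ ≤ 1)
    (hD1 : 2 * r ≤ dist a₁ b₁) (hD12 : dist a₁ b₁ ≤ dist a₂ b₂)
    (hx : ‖(a₁ + t₁ • (b₁ - a₁)) - (a₂ + t₂ • (b₂ - a₂))‖ ≤ σ * r / 2)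
    (hu : ‖(dist a₁ b₁)⁻¹ • (b₁ - a₁) - (dist a₂ b₂)⁻¹ • (b₂ - a₂)‖ ≤ σ / 4)
    (ht : |t₁ - t₂| ≤ σ / 4) :
    Metric.infDist (a₁ + θ • (b₁ - a₁)) (segment ℝ a₂ b₂) ≤ σ * dist a₁ b₁ := by
  have hD₁pos : 0 < dist a₁ b₁ := by linarith
  have hD₂pos : 0 < dist a₂ b₂ := by linarith
  set D₁ := dist a₁ b₁
  set D₂ := dist a₂ b₂
  set u₁ : E := D₁⁻¹ • (b₁ - a₁) with hu₁def
  set u₂ : E := D₂⁻¹ • (b₂ - a₂) with hu₂def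
  have hb₁ : b₁ - a₁ = D₁ • u₁ := by
    rw [hu₁def, smul_smul, mul_inv_cancel₀ hD₁pos.ne', one_smul]
  have hb₂ : b₂ - a₂ = D₂ • u₂ := by
    rw [hu₂def, smul_smul, mul_inv_cancel₀ hD₂pos.ne', one_smul]
  have hnb₂ : ‖b₂ - a₂‖ = D₂ := by rw [show D₂ = dist a₂ b₂ from rfl, dist_eq_norm, norm_sub_rev]
  have hu₂norm : ‖u₂‖ = 1 := by
    rw [hu₂def, norm_smul, Real.norm_eq_abs, abs_of_pos (inv_pos.2 hD₂pos), hnb₂,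
      inv_mul_cancel₀ hD₂pos.ne']
  set μ := min 1 (max 0 (t₂ + (θ - t₁) * D₁ / D₂)) with hμdef
  have hμ0 : 0 ≤ μ := le_min zero_le_one (le_max_left _ _)
  have hμ1 : μ ≤ 1 := min_le_left _ _
  have hq : a₂ + μ • (b₂ - a₂) ∈ segment ℝ a₂ b₂ := by
    rw [segment_eq_image']
    exact ⟨μ, ⟨hμ0, hμ1⟩, rfl⟩
  refine le_trans (Metric.infDist_le_dist_of_mem hq) ?_
  rw [dist_eq_norm]
  have hkey : |(θ - t₁) * D₁ - (μ - t₂) * D₂| ≤ σ / 4 * D₁ :=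
    clamp_key_s13 hσ hD₁pos hD12 ht₂0 ht₂1 hθ0 hθ1 ht
  have hident : (a₁ + θ • (b₁ - a₁)) - (a₂ + μ • (b₂ - a₂)) =
      ((a₁ + t₁ • (b₁ - a₁)) - (a₂ + t₂ • (b₂ - a₂))) + ((θ - t₁) * D₁) • (u₁ - u₂) +
        ((θ - t₁) * D₁ - (μ - t₂) * D₂) • u₂ := by
    rw [hb₁, hb₂]
    module
  have hAbs : |(θ - t₁) * D₁| ≤ D₁ := by
    rw [abs_mul, abs_of_pos hD₁pos]
    have h1 : |θ - t₁| ≤ 1 := by rw [abs_le]; constructor <;> linarith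
    nlinarith
  have h1 : ‖((θ - t₁) * D₁) • (u₁ - u₂)‖ ≤ D₁ * (σ / 4) := by
    rw [norm_smul, Real.norm_eq_abs]
    have h0 : (0:ℝ) ≤ |(θ - t₁) * D₁| := abs_nonneg _
    nlinarith [norm_nonneg (u₁ - u₂), hu]
  have h2 : ‖((θ - t₁) * D₁ - (μ - t₂) * D₂) • u₂‖ ≤ σ / 4 * D₁ := by
    rw [norm_smul, Real.norm_eq_abs, hu₂norm, mul_one]
    exact hkey
  calc ‖(a₁ + θ • (b₁ - a₁)) - (a₂ + μ • (b₂ - a₂))‖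
      ≤ ‖((a₁ + t₁ • (b₁ - a₁)) - (a₂ + t₂ • (b₂ - a₂))) + ((θ - t₁) * D₁) • (u₁ - u₂)‖ +
        ‖((θ - t₁) * D₁ - (μ - t₂) * D₂) • u₂‖ := by rw [hident]; exact norm_add_le _ _
    _ ≤ ‖(a₁ + t₁ • (b₁ - a₁)) - (a₂ + t₂ • (b₂ - a₂))‖ + ‖((θ - t₁) * D₁) • (u₁ - u₂)‖ +
        ‖((θ - t₁) * D₁ - (μ - t₂) * D₂) • u₂‖ := by
        linarith [norm_add_le ((a₁ + t₁ • (b₁ - a₁)) - (a₂ + t₂ • (b₂ - a₂)))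
          (((θ - t₁) * D₁) • (u₁ - u₂))]
    _ ≤ σ * r / 2 + D₁ * (σ / 4) + σ / 4 * D₁ := by linarith
    _ ≤ σ * D₁ := by nlinarith

set_option maxHeartbeats 1000000 in
/-- A `(σ, k)`-exposed family of segments in `ℝ^d` (each segment is `σ`-shadowed by at most
`k` other segments of the family) has density `O(k · σ^(−2d−2))`. -/
theorem stmt13 (d : ℕ) :
    ∃ C : ℝ, 0 < C ∧
      ∀ (σ : ℝ) (k : ℕ), 0 < σ → σ < 1 → 1 ≤ k →
      ∀ (n : ℕ) (a b : Fin n → EuclideanSpace ℝ (Fin d)),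
        Function.Injective (fun i => segment ℝ (a i) (b i)) →
        (∀ i : Fin n, ∀ s : Finset (Fin n),
          (∀ j ∈ s, j ≠ i ∧ Shadows σ (segment ℝ (a j) (b j)) (segment ℝ (a i) (b i))) →
          s.card ≤ k) →
        ∀ (c : EuclideanSpace ℝ (Fin d)) (r : ℝ), 0 < r →
        ∀ s : Finset (Fin n),
          (∀ i ∈ s, (segment ℝ (a i) (b i) ∩ Metric.closedBall c r).Nonempty ∧
            2 * r ≤ dist (a i) (b i)) →
          (s.card : ℝ) ≤ C * k / σ ^ (2 * d + 2) := by
  classical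
  refine ⟨20 * (8 * (d : ℝ) + 16) ^ (2 * d), by positivity, ?_⟩
  intro σ k hσ hσ1 hk n a b _hinj hexp c r hr s hs
  have hd0 : (0:ℝ) ≤ (d:ℝ) := Nat.cast_nonneg d
  have hd1 : (0:ℝ) < (d:ℝ) + 1 := by linarith
  set x : Fin n → EuclideanSpace ℝ (Fin d) := fun i =>
    if h : (segment ℝ (a i) (b i) ∩ Metric.closedBall c r).Nonempty then h.choose else a i
    with hxdef
  have hxseg : ∀ i, x i ∈ segment ℝ (a i) (b i) := by
    intro i
    rw [hxdef]
    by_cases h : (segment ℝ (a i) (b i) ∩ Metric.closedBall c r).Nonempty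
    · simp only [dif_pos h]
      exact h.choose_spec.1
    · simp only [dif_neg h]
      exact left_mem_segment ℝ _ _
  have hxball : ∀ i ∈ s, dist (x i) c ≤ r := by
    intro i hi
    have h := (hs i hi).1
    rw [hxdef]
    simp only [dif_pos h]
    exact Metric.mem_closedBall.mp h.choose_spec.2
  have hex : ∀ i, ∃ θ : ℝ, (0 ≤ θ ∧ θ ≤ 1) ∧ a i + θ • (b i - a i) = x i := by
    intro i
    have h := hxseg i
    rw [segment_eq_image'] at h
    obtain ⟨θ, hθ, he⟩ := h
    exact ⟨θ, ⟨hθ.1, hθ.2⟩, he⟩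
  choose t htmem hxe using hex
  set u : Fin n → EuclideanSpace ℝ (Fin d) := fun i => (dist (a i) (b i))⁻¹ • (b i - a i)
    with hudef
  have hunorm : ∀ i ∈ s, ‖u i‖ ≤ 1 := by
    intro i hi
    have hD : 0 < dist (a i) (b i) := lt_of_lt_of_le (by linarith) (hs i hi).2
    rw [hudef]
    simp only
    rw [norm_smul, Real.norm_eq_abs, abs_of_pos (inv_pos.2 hD),
      show ‖b i - a i‖ = dist (a i) (b i) by rw [dist_eq_norm, norm_sub_rev],
      inv_mul_cancel₀ hD.ne']
  set εx : ℝ := σ * r / (2 * ((d : ℝ) + 1)) with hεx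
  set εu : ℝ := σ / (4 * ((d : ℝ) + 1)) with hεu
  set εt : ℝ := σ / 4 with hεt
  have hεxpos : 0 < εx := by rw [hεx]; positivity
  have hεupos : 0 < εu := by rw [hεu]; positivity
  have hεtpos : 0 < εt := by rw [hεt]; positivity
  set Φ : Fin n → (Fin d → ℤ) × ((Fin d → ℤ) × ℤ) := fun i =>
    (fun m => ⌊(x i - c) m / εx⌋, fun m => ⌊u i m / εu⌋, ⌊t i / εt⌋) with hΦdef
  set Kx : ℤ := ⌊r / εx⌋ with hKx
  set Ku : ℤ := ⌊1 / εu⌋ with hKu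
  set Kt : ℤ := ⌊1 / εt⌋ with hKt
  set T : Finset ((Fin d → ℤ) × ((Fin d → ℤ) × ℤ)) :=
    (Fintype.piFinset fun _ : Fin d => Finset.Icc (-(Kx + 1)) Kx) ×ˢ
      ((Fintype.piFinset fun _ : Fin d => Finset.Icc (-(Ku + 1)) Ku) ×ˢ
        Finset.Icc (-(Kt + 1)) Kt) with hT
  have hmaps : ∀ i ∈ s, Φ i ∈ T := by
    intro i hi
    rw [hT, hΦdef]
    simp only [Finset.mem_product, Fintype.mem_piFinset, Finset.mem_Icc]
    refine ⟨fun m => ?_, fun m => ?_, ?_⟩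
    · have hcoord : |(x i - c) m| ≤ r := by
        refine le_trans (coord_abs_le_norm _ m) ?_
        rw [← dist_eq_norm]
        exact hxball i hi
      exact floor_mem_Icc_of_abs_le hεxpos hcoord
    · have hcoord : |u i m| ≤ 1 := le_trans (coord_abs_le_norm _ m) (hunorm i hi)
      exact floor_mem_Icc_of_abs_le hεupos hcoord
    · have hcoord : |t i| ≤ 1 := by
        rw [abs_le]
        exact ⟨by linarith [(htmem i).1], (htmem i).2⟩
      exact floor_mem_Icc_of_abs_le hεtpos hcoord
  have hfib : ∀ v ∈ T, (s.filter fun i => Φ i = v).card ≤ k + 1 := by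
    intro v _hv
    rcases Finset.eq_empty_or_nonempty (s.filter fun i => Φ i = v) with he | hne
    · rw [he]; simp
    · obtain ⟨i, hiF, hmin⟩ :=
        Finset.exists_min_image (s.filter fun i => Φ i = v) (fun i => dist (a i) (b i)) hne
      have his : i ∈ s := (Finset.mem_filter.mp hiF).1
      have hclaim : ∀ j ∈ (s.filter fun i => Φ i = v).erase i,
          j ≠ i ∧ Shadows σ (segment ℝ (a j) (b j)) (segment ℝ (a i) (b i)) := by
        intro j hj
        have hji : j ≠ i := Finset.ne_of_mem_erase hj
        have hjF := Finset.mem_of_mem_erase hj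
        have hjs : j ∈ s := (Finset.mem_filter.mp hjF).1
        refine ⟨hji, ?_⟩
        have hΦij : Φ i = Φ j := by
          rw [(Finset.mem_filter.mp hiF).2, (Finset.mem_filter.mp hjF).2]
        simp only [hΦdef, Prod.mk.injEq] at hΦij
        obtain ⟨e1, e2, e3⟩ := hΦij
        have hxnorm : ‖x i - x j‖ ≤ σ * r / 2 := by
          have hb : ∀ m, |(x i - x j) m| ≤ εx := by
            intro m
            have h := abs_lt_of_floor_div_eq hεxpos (congrFun e1 m)
            have he : (x i - x j) m = (x i - c) m - (x j - c) m := by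
              simp only [PiLp.sub_apply]
              ring
            rw [he]
            exact h.le
          refine (norm_le_of_coords _ εx hεxpos.le hb).trans ?_
          have hq : (d:ℝ) / ((d:ℝ) + 1) ≤ 1 := (div_le_one hd1).mpr (by linarith)
          calc (d:ℝ) * εx = σ * r / 2 * ((d:ℝ) / ((d:ℝ) + 1)) := by
                rw [hεx]; field_simp <;> ring
            _ ≤ σ * r / 2 * 1 := by
                apply mul_le_mul_of_nonneg_left hq (by positivity)
            _ = σ * r / 2 := mul_one _
        have hun : ‖u i - u j‖ ≤ σ / 4 := by
          have hb : ∀ m, |(u i - u j) m| ≤ εu := by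
            intro m
            have h := abs_lt_of_floor_div_eq hεupos (congrFun e2 m)
            have he : (u i - u j) m = u i m - u j m := by simp only [PiLp.sub_apply]
            rw [he]
            exact h.le
          refine (norm_le_of_coords _ εu hεupos.le hb).trans ?_
          have hq : (d:ℝ) / ((d:ℝ) + 1) ≤ 1 := (div_le_one hd1).mpr (by linarith)
          calc (d:ℝ) * εu = σ / 4 * ((d:ℝ) / ((d:ℝ) + 1)) := by
                rw [hεu]; field_simp <;> ring
            _ ≤ σ / 4 * 1 := by apply mul_le_mul_of_nonneg_left hq (by positivity)
            _ = σ / 4 := mul_one _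
        have htij : |t i - t j| ≤ σ / 4 := by
          have h := abs_lt_of_floor_div_eq hεtpos e3
          rw [hεt] at h
          exact h.le
        intro p hp
        rw [segment_eq_image'] at hp
        obtain ⟨θ, hθ, rfl⟩ := hp
        have hmain := shadow_aux (σ := σ) (r := r)
          (t₁ := t i) (t₂ := t j) (θ := θ)
          (a₁ := a i) (b₁ := b i) (a₂ := a j) (b₂ := b j)
          hσ hr (htmem j).1 (htmem j).2 hθ.1 hθ.2 (htmem i).1 (htmem i).2
          (hs i his).2 (hmin j hjF)
          (by rw [hxe i, hxe j]; exact hxnorm) hun htij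
        refine hmain.trans ?_
        apply mul_le_mul_of_nonneg_left _ hσ.le
        exact Metric.dist_le_diam_of_mem (isBounded_segment' _ _)
          (left_mem_segment ℝ _ _) (right_mem_segment ℝ _ _)
      have hkcard := hexp i ((s.filter fun i => Φ i = v).erase i) hclaim
      have h1 : 1 ≤ (s.filter fun i => Φ i = v).card := Finset.card_pos.mpr ⟨i, hiF⟩
      rw [Finset.card_erase_of_mem hiF] at hkcard
      omega
  have hcard : s.card ≤ (k + 1) * T.card :=
    Finset.card_le_mul_card_image_of_maps_to hmaps (k + 1) hfib
  have hKx0 : 0 ≤ Kx := by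
    rw [hKx]
    exact Int.floor_nonneg.mpr (by positivity)
  have hKu0 : 0 ≤ Ku := by
    rw [hKu]
    exact Int.floor_nonneg.mpr (by positivity)
  have hKt0 : 0 ≤ Kt := by
    rw [hKt]
    exact Int.floor_nonneg.mpr (by positivity)
  have hTcard : (T.card : ℝ) =
      (2 * (Kx:ℝ) + 2) ^ d * ((2 * (Ku:ℝ) + 2) ^ d * (2 * (Kt:ℝ) + 2)) := by
    rw [hT, Finset.card_product, Finset.card_product,
      Fintype.card_piFinset_const, Fintype.card_piFinset_const]
    push_cast
    rw [card_Icc_real hKx0, card_Icc_real hKu0, card_Icc_real hKt0]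
  have hKxb : (Kx:ℝ) * σ ≤ 2 * (d:ℝ) + 2 := by
    have h1 : (Kx:ℝ) ≤ r / εx := by rw [hKx]; exact Int.floor_le _
    have h2 : r / εx = 2 * ((d:ℝ) + 1) / σ := by rw [hεx]; field_simp <;> ring
    rw [h2] at h1
    have := (le_div_iff₀ hσ).mp h1
    linarith
  have hKub : (Ku:ℝ) * σ ≤ 4 * (d:ℝ) + 4 := by
    have h1 : (Ku:ℝ) ≤ 1 / εu := by rw [hKu]; exact Int.floor_le _
    have h2 : (1:ℝ) / εu = 4 * ((d:ℝ) + 1) / σ := by rw [hεu]; field_simp <;> ring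
    rw [h2] at h1
    have := (le_div_iff₀ hσ).mp h1
    linarith
  have hKtb : (Kt:ℝ) * σ ≤ 4 := by
    have h1 : (Kt:ℝ) ≤ 1 / εt := by rw [hKt]; exact Int.floor_le _
    have h2 : (1:ℝ) / εt = 4 / σ := by rw [hεt, one_div, inv_div]
    rw [h2] at h1
    have := (le_div_iff₀ hσ).mp h1
    linarith
  set X : ℝ := 2 * (Kx:ℝ) + 2 with hX
  set Y : ℝ := 2 * (Ku:ℝ) + 2 with hY
  set Z : ℝ := 2 * (Kt:ℝ) + 2 with hZ
  have hKx0' : (0:ℝ) ≤ (Kx:ℝ) := by exact_mod_cast hKx0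
  have hKu0' : (0:ℝ) ≤ (Ku:ℝ) := by exact_mod_cast hKu0
  have hKt0' : (0:ℝ) ≤ (Kt:ℝ) := by exact_mod_cast hKt0
  have hXnn : 0 ≤ X := by rw [hX]; linarith
  have hYnn : 0 ≤ Y := by rw [hY]; linarith
  have hZnn : 0 ≤ Z := by rw [hZ]; linarith
  have hXσ : X * σ ≤ 8 * (d:ℝ) + 16 := by rw [hX]; nlinarith
  have hYσ : Y * σ ≤ 8 * (d:ℝ) + 16 := by rw [hY]; nlinarith
  have hZσ : Z * σ ≤ 10 := by rw [hZ]; nlinarith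
  have hpow : (0:ℝ) < σ ^ (2 * d + 2) := by positivity
  rw [le_div_iff₀ hpow]
  have e1 : (X * σ) ^ d ≤ (8 * (d:ℝ) + 16) ^ d :=
    pow_le_pow_left₀ (mul_nonneg hXnn hσ.le) hXσ d
  have e2 : (Y * σ) ^ d ≤ (8 * (d:ℝ) + 16) ^ d :=
    pow_le_pow_left₀ (mul_nonneg hYnn hσ.le) hYσ d
  have e4 : (Y * σ) ^ d * (Z * σ) ≤ (8 * (d:ℝ) + 16) ^ d * 10 :=
    mul_le_mul e2 hZσ (mul_nonneg hZnn hσ.le) (by positivity)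
  have e5 : (X * σ) ^ d * ((Y * σ) ^ d * (Z * σ)) ≤
      (8 * (d:ℝ) + 16) ^ d * ((8 * (d:ℝ) + 16) ^ d * 10) :=
    mul_le_mul e1 e4 (mul_nonneg (pow_nonneg (mul_nonneg hYnn hσ.le) d)
      (mul_nonneg hZnn hσ.le)) (by positivity)
  have e6 : ((X * σ) ^ d * ((Y * σ) ^ d * (Z * σ))) * σ ≤
      ((8 * (d:ℝ) + 16) ^ d * ((8 * (d:ℝ) + 16) ^ d * 10)) * 1 :=
    mul_le_mul e5 hσ1.le hσ.le (by positivity)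
  have hk2 : (k:ℝ) + 1 ≤ 2 * (k:ℝ) := by
    have : (1:ℝ) ≤ (k:ℝ) := by exact_mod_cast hk
    linarith
  have hinnn : 0 ≤ ((X * σ) ^ d * ((Y * σ) ^ d * (Z * σ))) * σ :=
    mul_nonneg (mul_nonneg (pow_nonneg (mul_nonneg hXnn hσ.le) d)
      (mul_nonneg (pow_nonneg (mul_nonneg hYnn hσ.le) d) (mul_nonneg hZnn hσ.le))) hσ.le
  have e7 : ((k:ℝ) + 1) * (((X * σ) ^ d * ((Y * σ) ^ d * (Z * σ))) * σ) ≤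
      (2 * (k:ℝ)) * (((8 * (d:ℝ) + 16) ^ d * ((8 * (d:ℝ) + 16) ^ d * 10)) * 1) :=
    mul_le_mul hk2 e6 hinnn (by positivity)
  have hsplit : σ ^ (2 * d + 2) = σ ^ d * σ ^ d * σ * σ := by
    rw [pow_add σ (2 * d) 2, two_mul, pow_add]
    ring
  calc (s.card : ℝ) * σ ^ (2 * d + 2)
      ≤ ((k:ℝ) + 1) * (X ^ d * (Y ^ d * Z)) * σ ^ (2 * d + 2) := by
        apply mul_le_mul_of_nonneg_right _ hpow.le
        calc (s.card : ℝ) ≤ (((k + 1) * T.card : ℕ) : ℝ) := by exact_mod_cast hcard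
          _ = ((k:ℝ) + 1) * (T.card : ℝ) := by push_cast; ring
          _ = ((k:ℝ) + 1) * (X ^ d * (Y ^ d * Z)) := by rw [hTcard]
    _ = ((k:ℝ) + 1) * (((X * σ) ^ d * ((Y * σ) ^ d * (Z * σ))) * σ) := by
        rw [hsplit, mul_pow, mul_pow]
        ring
    _ ≤ (2 * (k:ℝ)) * (((8 * (d:ℝ) + 16) ^ d * ((8 * (d:ℝ) + 16) ^ d * 10)) * 1) := e7
    _ = 20 * (8 * (d:ℝ) + 16) ^ (2 * d) * (k:ℝ) := by
        rw [two_mul d, pow_add]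
        ring
end
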